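/- arXiv:2502.11795 — 6 statements merged into one kernel-verified Lean document; each statement's English description precedes it below -/
import Mathlib

section
/- Let η, ε : F ⊣ U : A → X be an adjunction between categories, let T = (T, μ, η^T) be a monad on X, and let K : A → X^T be a functor into the Eilenberg–Moore category of T-algebras satisfying U^T ∘ K = U. Let S = (UF, UεF, η) be the monad on X generated by the adjunction F ⊣ U, and let s_K : T → S be the induced monad morphism, namely s_K = U^T γ_K where γ_K is the composite F^T → F^T U F = F^T U^T K F → K F given by (ε^T K F) ∘ (F^T η). Then K is an equivalence of categories if and only if (i) U is monadic and (ii) s_K is an isomorphism of monads. -/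
/-!
`γ_K = inducedFreeHom : F^T ⟶ F ⋙ K` is the transpose of the unit of `F ⊣ U`, and
`s_K = inducedMonadHom` is `U^T γ_K`. By a triangle identity, `s_K` followed by `U ε` is the
structure map of `K a`, so `K` is the comparison functor of `F ⊣ U` followed by restriction of
scalars along `s_K`.

If `K` is an equivalence, then `F` and `F^T ⋙ K⁻¹` are both left adjoint to `U`, and `γ_K` is
`K` applied to the canonical isomorphism between them, so `s_K` is invertible; restriction along
`s_K` is then an equivalence, hence so is the comparison functor. Conversely, if `s_K` is
invertible, `K` is an equivalence as soon as the comparison functor of `F ⊣ U` is. Monadicity of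
`U` only gives this for some other left adjoint `L ⊣ U`; but the comparison functor of `L ⊣ U`
is an equivalence over `X`, so the first half, applied to it, covers `F ⊣ U` as well.
-/

open CategoryTheory

universe v₁ v₂ u₁ u₂

namespace CategoryTheory

lemma MonadHom.isIso_iff_isIso_app {C : Type*} [Category C] {T₁ T₂ : Monad C}
    (f : T₁ ⟶ T₂) : IsIso f ↔ ∀ x, IsIso (f.app x) := by
  refine ⟨fun _ x => inferInstanceAs (IsIso (((monadToFunctor C).map f).app x)), fun h => ?_⟩
  have (x : C) : IsIso (((monadToFunctor C).map f).app x) := h x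
  have : IsIso ((monadToFunctor C).map f) := NatIso.isIso_of_isIso_app _
  exact isIso_of_reflects_iso f (monadToFunctor C)

namespace Monad

instance isEquivalence_algebraFunctorOfMonadHom {C : Type*} [Category C] {T₁ T₂ : Monad C}
    (f : T₁ ⟶ T₂) [IsIso f] : (algebraFunctorOfMonadHom f).IsEquivalence :=
  (algebraEquivOfIsoMonads (asIso f).symm).isEquivalence_functor

lemma adj_homEquiv_symm_f {C : Type*} [Category C] {T : Monad C} {x : C} {B : T.Algebra}
    (g : x ⟶ T.forget.obj B) : ((T.adj.homEquiv x B).symm g).f = T.map g ≫ B.a := by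
  rw [Adjunction.homEquiv_counit, Algebra.comp_f, adj_counit]
  rfl

section Induced

variable {X : Type u₁} [Category.{v₁} X] {A : Type u₂} [Category.{v₂} A]
  {F : X ⥤ A} {T : Monad X} {K : A ⥤ T.Algebra} (adj : F ⊣ K ⋙ T.forget)

def inducedFreeHom : T.free ⟶ F ⋙ K :=
  Functor.whiskerRight adj.unit T.free ≫ Functor.whiskerLeft (F ⋙ K) T.adj.counit

lemma inducedFreeHom_app (x : X) :
    (inducedFreeHom adj).app x = (T.adj.homEquiv x (K.obj (F.obj x))).symm (adj.unit.app x) :=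
  (T.adj.homEquiv_counit _ _ _).symm

lemma homEquiv_inducedFreeHom_app (x : X) :
    T.adj.homEquiv x (K.obj (F.obj x)) ((inducedFreeHom adj).app x) = adj.unit.app x := by
  rw [inducedFreeHom_app]
  exact Equiv.apply_symm_apply _ _

lemma inducedFreeHom_app_f_comp_map_counit_f (a : A) :
    ((inducedFreeHom adj).app ((K ⋙ T.forget).obj a)).f ≫ (K.map (adj.counit.app a)).f =
      (K.obj a).a := by
  have h : (inducedFreeHom adj).app ((K ⋙ T.forget).obj a) ≫ K.map (adj.counit.app a) =
      T.adj.counit.app (K.obj a) := by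
    rw [inducedFreeHom_app]
    refine (T.adj.homEquiv_naturality_right_symm _ _).symm.trans ?_
    refine (congrArg _ (adj.right_triangle_components a)).trans ?_
    exact T.adj.homEquiv_symm_id _
  rw [← Algebra.comp_f, h, adj_counit]

def inducedMonadHom : T ⟶ adj.toMonad where
  toNatTrans := Functor.whiskerRight (inducedFreeHom adj) T.forget
  app_η x := by
    show T.η.app x ≫ ((inducedFreeHom adj).app x).f = adj.unit.app x
    rw [← homEquiv_inducedFreeHom_app, Adjunction.homEquiv_unit, adj_unit]
    rfl
  app_μ x := by
    show T.μ.app x ≫ ((inducedFreeHom adj).app x).f =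
      (T.map ((inducedFreeHom adj).app x).f ≫
        ((inducedFreeHom adj).app ((K ⋙ T.forget).obj (F.obj x))).f) ≫
          (K.map (adj.counit.app (F.obj x))).f
    exact ((inducedFreeHom adj).app x).h.symm.trans
      ((congrArg (_ ≫ ·) (inducedFreeHom_app_f_comp_map_counit_f adj (F.obj x)).symm).trans
        (Category.assoc _ _ _).symm)

lemma inducedMonadHom_app (x : X) :
    (inducedMonadHom adj).app x = T.map (adj.unit.app x) ≫ (K.obj (F.obj x)).a :=
  (congrArg Algebra.Hom.f (inducedFreeHom_app adj x)).trans (adj_homEquiv_symm_f _)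

def isoComparisonComp :
    K ≅ comparison adj ⋙ algebraFunctorOfMonadHom (inducedMonadHom adj) :=
  NatIso.ofComponents
    (fun a => Algebra.isoMk (Iso.refl _) (by
      erw [T.map_id, Category.id_comp, Category.comp_id]
      exact inducedFreeHom_app_f_comp_map_counit_f adj a))
    (fun g => by ext; exact (Category.comp_id _).trans (Category.id_comp _).symm)

lemma isIso_inducedFreeHom_app [K.IsEquivalence] (x : X) :
    IsIso ((inducedFreeHom adj).app x) := by
  let e := K.asEquivalence
  let φ := Adjunction.leftAdjointUniq (T.adj.comp e.symm.toAdjunction) adj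
  have h : (inducedFreeHom adj).app x = e.counitInv.app (T.free.obj x) ≫ K.map (φ.hom.app x) :=
    (T.adj.homEquiv x (K.obj (F.obj x))).injective <| by
      refine (homEquiv_inducedFreeHom_app adj x).trans ?_
      refine Eq.trans ?_ (T.adj.homEquiv_naturality_right _ _).symm
      refine Eq.trans ?_ (congrArg (· ≫ _) (T.adj.homEquiv_unit _ _ _).symm)
      exact (Adjunction.unit_leftAdjointUniq_hom_app _ adj x).symm.trans
        (congrArg (· ≫ (K ⋙ T.forget).map (φ.hom.app x))
          (Adjunction.comp_unit_app T.adj e.symm.toAdjunction x))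
  rw [h]
  have : IsIso (φ.hom.app x) := (φ.app x).isIso_hom
  exact IsIso.comp_isIso' inferInstance (K.map_isIso _)

lemma isIso_inducedMonadHom [K.IsEquivalence] : IsIso (inducedMonadHom adj) :=
  (MonadHom.isIso_iff_isIso_app _).2 fun x =>
    have := isIso_inducedFreeHom_app adj x
    T.forget.map_isIso ((inducedFreeHom adj).app x)

lemma isEquivalence_comparison_of_isEquivalence [K.IsEquivalence] :
    (comparison adj).IsEquivalence := by
  have := isIso_inducedMonadHom adj
  have : (comparison adj ⋙ algebraFunctorOfMonadHom (inducedMonadHom adj)).IsEquivalence :=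
    Functor.isEquivalence_of_iso (isoComparisonComp adj)
  exact Functor.isEquivalence_of_comp_right _ (algebraFunctorOfMonadHom (inducedMonadHom adj))

end Induced

lemma isEquivalence_comparison_of_monadicRightAdjoint {X : Type u₁} [Category.{v₁} X]
    {A : Type u₂} [Category.{v₂} A] {F : X ⥤ A} {U : A ⥤ X} (adj : F ⊣ U)
    [MonadicRightAdjoint U] : (comparison adj).IsEquivalence :=
  isEquivalence_comparison_of_isEquivalence (K := comparison (monadicAdjunction U)) adj

theorem isEquivalence_iff_monadic_and_isIso_inducedMonadHom {X : Type u₁} [Category.{v₁} X]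
    {A : Type u₂} [Category.{v₂} A] {F : X ⥤ A} {T : Monad X} {K : A ⥤ T.Algebra}
    (adj : F ⊣ K ⋙ T.forget) :
    K.IsEquivalence ↔
      Nonempty (MonadicRightAdjoint (K ⋙ T.forget)) ∧ IsIso (inducedMonadHom adj) := by
  refine ⟨fun _ => ⟨⟨⟨F, adj, isEquivalence_comparison_of_isEquivalence adj⟩⟩,
    isIso_inducedMonadHom adj⟩, ?_⟩
  rintro ⟨⟨_⟩, _⟩
  have := isEquivalence_comparison_of_monadicRightAdjoint adj
  exact Functor.isEquivalence_of_iso (isoComparisonComp adj).symm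

end Monad

end CategoryTheory

theorem comparison_theorem
    {X : Type u₁} [Category.{v₁} X] {A : Type u₂} [Category.{v₂} A]
    (F : X ⥤ A) (U : A ⥤ X) (adj : F ⊣ U)
    (T : Monad X) (K : A ⥤ T.Algebra)
    (hU : K ⋙ T.forget = U) :
    K.IsEquivalence ↔
      (Nonempty (MonadicRightAdjoint U) ∧
        ∀ x : X,
          IsIso ((T : X ⥤ X).map (adj.unit.app x) ≫
            eqToHom (congrArg (T : X ⥤ X).obj (Functor.congr_obj hU (F.obj x)).symm) ≫
            (K.obj (F.obj x)).a ≫ eqToHom (Functor.congr_obj hU (F.obj x)))) := by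
  subst hU
  rw [Monad.isEquivalence_iff_monadic_and_isIso_inducedMonadHom adj, MonadHom.isIso_iff_isIso_app]
  refine and_congr Iff.rfl (forall_congr' fun x => ?_)
  rw [Monad.inducedMonadHom_app]
  simp only [eqToHom_refl, Category.id_comp]
  exact Iff.of_eq (congrArg (IsIso <| T.map (adj.unit.app x) ≫ ·) (Category.comp_id _).symm)
end

section
/- Let Q be a quantaloid, let Q be an object of Q such that all set-indexed copowers Q^(X) (coproducts of X copies of Q) exist in Q, and let E = Hom_Q(Q,Q) be the endomorphism quantale of Q (composition as multiplication, identity as unit). Then the functor K^Q : Q → Mod_E(Sl) sending an object A to the right E-module Hom_Q(Q,A) (with E-action given by composition) is an equivalence of categories if and only if the hom-functor Q(Q,−) : Q → Set is monadic. -/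
open CategoryTheory Set

universe u v w

class UQuantale (A : Type u) extends CompleteLattice A, Monoid A where
  mul_sSup : ∀ (a : A) (s : Set A), a * sSup s = ⨆ b ∈ s, a * b
  sSup_mul : ∀ (s : Set A) (b : A), sSup s * b = ⨆ a ∈ s, a * b

namespace UQuantale
variable {A : Type u} [UQuantale A]

theorem mul_iSup {ι : Sort w} (a : A) (f : ι → A) : a * (⨆ i, f i) = ⨆ i, a * f i := by
  rw [iSup, mul_sSup]; exact iSup_range

theorem iSup_mul {ι : Sort w} (f : ι → A) (b : A) : (⨆ i, f i) * b = ⨆ i, f i * b := by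
  rw [iSup, sSup_mul]; exact iSup_range

theorem mul_bot (a : A) : a * (⊥ : A) = ⊥ := by
  have := mul_sSup a (∅ : Set A); simpa using this

theorem bot_mul (a : A) : (⊥ : A) * a = ⊥ := by
  have := sSup_mul (∅ : Set A) a; simpa using this

end UQuantale

structure QMod (A : Type u) [UQuantale A] : Type (max u (v + 1)) where
  carrier : Type v
  [latt : CompleteLattice carrier]
  act : carrier → A → carrier
  act_one : ∀ m, act m 1 = m
  act_mul : ∀ m a b, act m (a * b) = act (act m a) b
  sSup_act : ∀ (s : Set carrier) (a : A), act (sSup s) a = ⨆ m ∈ s, act m a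
  act_sSup : ∀ (m : carrier) (s : Set A), act m (sSup s) = ⨆ a ∈ s, act m a

attribute [instance] QMod.latt

namespace QMod

variable {A : Type u} [UQuantale A]

def IsHom (M N : QMod.{u, v} A) (f : M.carrier → N.carrier) : Prop :=
  (∀ s : Set M.carrier, f (sSup s) = ⨆ m ∈ s, f m) ∧
  (∀ m a, f (M.act m a) = N.act (f m) a)

theorem isHom_id (M : QMod.{u, v} A) : IsHom M M id :=
  ⟨fun s => by simp [sSup_eq_iSup], fun _ _ => rfl⟩

theorem isHom_comp {M N P : QMod.{u, v} A} {f : M.carrier → N.carrier}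
    {g : N.carrier → P.carrier} (hf : IsHom M N f) (hg : IsHom N P g) :
    IsHom M P (g ∘ f) := by
  constructor
  · intro s
    show g (f (sSup s)) = _
    rw [hf.1 s, ← sSup_image, hg.1, iSup_image]
    rfl
  · intro m a
    show g (f (M.act m a)) = _
    rw [hf.2, hg.2]
    rfl

instance : Category.{v} (QMod.{u, v} A) where
  Hom M N := { f : M.carrier → N.carrier // IsHom M N f }
  id M := ⟨id, isHom_id M⟩
  comp f g := ⟨g.1 ∘ f.1, isHom_comp f.2 g.2⟩
  id_comp _ := Subtype.ext rfl
  comp_id _ := Subtype.ext rfl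
  assoc _ _ _ := Subtype.ext rfl

theorem iSup_act (M : QMod.{u, v} A) {ι : Sort w} (g : ι → M.carrier) (a : A) :
    M.act (⨆ i, g i) a = ⨆ i, M.act (g i) a := by
  rw [iSup, M.sSup_act]; exact iSup_range

theorem act_iSup (M : QMod.{u, v} A) (m : M.carrier) {ι : Sort w} (g : ι → A) :
    M.act m (⨆ i, g i) = ⨆ i, M.act m (g i) := by
  rw [iSup, M.act_sSup]; exact iSup_range

theorem hom_iSup {M N : QMod.{u, v} A} (f : M ⟶ N) {ι : Sort w} (g : ι → M.carrier) :
    f.1 (⨆ i, g i) = ⨆ i, f.1 (g i) := by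
  rw [iSup, f.2.1, iSup_range]

/-- The pointwise supremum of a set of module morphisms is a module morphism. -/
theorem isHom_biSup {M N : QMod.{u, v} A} (s : Set (M ⟶ N)) :
    IsHom M N (fun m => ⨆ f ∈ s, f.1 m) := by
  constructor
  · intro t
    calc (⨆ f ∈ s, f.1 (sSup t)) = ⨆ f ∈ s, ⨆ m ∈ t, f.1 m :=
          iSup_congr fun f => iSup_congr fun _ => f.2.1 t
      _ = ⨆ m ∈ t, ⨆ f ∈ s, f.1 m := iSup₂_comm _
  · intro m a
    simp only [iSup_act]
    exact iSup_congr fun f => iSup_congr fun _ => f.2.2 m a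

instance homSupSet (M N : QMod.{u, v} A) : SupSet (M ⟶ N) :=
  ⟨fun s => ⟨fun m => ⨆ f ∈ s, f.1 m, isHom_biSup s⟩⟩

instance homPartialOrder (M N : QMod.{u, v} A) : PartialOrder (M ⟶ N) :=
  inferInstanceAs (PartialOrder { f : M.carrier → N.carrier // IsHom M N f })

theorem hom_le_iff {M N : QMod.{u, v} A} {f g : M ⟶ N} : f ≤ g ↔ ∀ m, f.1 m ≤ g.1 m :=
  Iff.rfl

instance homCompleteLattice (M N : QMod.{u, v} A) : CompleteLattice (M ⟶ N) :=
  completeLatticeOfSup _ (fun s => by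
    constructor
    · intro f hf
      intro m
      exact le_iSup₂ (f := fun (f : M ⟶ N) (_ : f ∈ s) => f.1 m) f hf
    · intro g hg
      intro m
      exact iSup₂_le fun f hf => hg hf m)

theorem sSup_hom_apply {M N : QMod.{u, v} A} (s : Set (M ⟶ N)) (m : M.carrier) :
    (sSup s).1 m = ⨆ f ∈ s, f.1 m := rfl

theorem iSup_hom_apply {M N : QMod.{u, v} A} {ι : Sort w} (F : ι → (M ⟶ N)) (m : M.carrier) :
    (⨆ i, F i).1 m = ⨆ i, (F i).1 m := by
  rw [iSup]
  show ⨆ f ∈ range F, f.1 m = _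
  exact iSup_range

instance endMonoid (M : QMod.{u, v} A) : Monoid (M ⟶ M) where
  mul f g := g ≫ f
  one := 𝟙 M
  mul_assoc _ _ _ := Subtype.ext rfl
  one_mul _ := Subtype.ext rfl
  mul_one _ := Subtype.ext rfl

theorem end_mul_apply {M : QMod.{u, v} A} (f g : M ⟶ M) (m : M.carrier) :
    (f * g).1 m = f.1 (g.1 m) := rfl

/-- The endomorphism quantale `Hom_A(M,M)` of a right `A`-module `M`:
multiplication is composition, the unit is the identity, suprema are pointwise. -/
instance endQuantale (M : QMod.{u, v} A) : UQuantale (M ⟶ M) :=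
  { homCompleteLattice M M, endMonoid M with
    mul_sSup := fun a s => by
      apply Subtype.ext
      funext m
      show a.1 ((sSup s).1 m) = (⨆ b ∈ s, a * b).1 m
      rw [sSup_hom_apply]
      simp only [hom_iSup, iSup_hom_apply]
      rfl
    sSup_mul := fun s b => by
      apply Subtype.ext
      funext m
      show (sSup s).1 (b.1 m) = (⨆ a ∈ s, a * b).1 m
      rw [sSup_hom_apply]
      simp only [iSup_hom_apply]
      rfl }

/-- `Q` is a generator of the category of right `A`-modules:
the hom functor out of `Q` is faithful. -/
def IsGenerator {A : Type u} [UQuantale A] (Q : QMod.{u, v} A) : Prop :=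
  ∀ {M N : QMod.{u, v} A} (f g : M ⟶ N), (∀ h : Q ⟶ M, h ≫ f = h ≫ g) → f = g

/-- `Q` is projective: the hom functor out of `Q` sends epimorphisms to surjections. -/
def IsProjective {A : Type u} [UQuantale A] (Q : QMod.{u, v} A) : Prop :=
  ∀ {M N : QMod.{u, v} A} (p : M ⟶ N), Epi p → ∀ h : Q ⟶ N, ∃ k : Q ⟶ M, k ≫ p = h

end QMod

def MoritaEquivalent (A B : Type u) [UQuantale A] [UQuantale B] : Prop :=
  Nonempty (QMod.{u, u} A ≌ QMod.{u, u} B)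

def IsQuantaleIso {A : Type u} {B : Type v} [UQuantale A] [UQuantale B] (f : A → B) : Prop :=
  Function.Bijective f ∧ (∀ s : Set A, f (sSup s) = ⨆ a ∈ s, f a) ∧
    f 1 = 1 ∧ ∀ a a' : A, f (a * a') = f a * f a'
/-! ### Quantaloids -/

/-- The data of a complete lattice structure on each hom-set of a category. -/
class QuantaloidStruct (Q : Type u) [Category.{v} Q] where
  homLattice : ∀ X Y : Q, CompleteLattice (X ⟶ Y)

attribute [instance] QuantaloidStruct.homLattice

/-- A *quantaloid*: a category enriched in sup-lattices, i.e. each hom-set is a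
complete lattice and composition preserves arbitrary suprema in each variable. -/
class Quantaloid (Q : Type u) [Category.{v} Q] extends QuantaloidStruct Q where
  comp_sSup : ∀ {X Y Z : Q} (f : X ⟶ Y) (s : Set (Y ⟶ Z)), f ≫ sSup s = ⨆ g ∈ s, f ≫ g
  sSup_comp : ∀ {X Y Z : Q} (s : Set (X ⟶ Y)) (g : Y ⟶ Z), sSup s ≫ g = ⨆ f ∈ s, f ≫ g

namespace Quantaloid

variable {Q : Type u} [Category.{v} Q] [Quantaloid Q]

theorem comp_iSup {X Y Z : Q} (f : X ⟶ Y) {ι : Sort w} (g : ι → (Y ⟶ Z)) :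
    f ≫ (⨆ i, g i) = ⨆ i, f ≫ g i := by
  rw [iSup, comp_sSup]; exact iSup_range

theorem iSup_comp {X Y Z : Q} {ι : Sort w} (f : ι → (X ⟶ Y)) (g : Y ⟶ Z) :
    (⨆ i, f i) ≫ g = ⨆ i, f i ≫ g := by
  rw [iSup, sSup_comp]; exact iSup_range

/-- The endomorphism quantale of an object of a quantaloid: the complete lattice
`Hom(X,X)` with composition as multiplication and the identity as unit. -/
instance endQuantale (X : Q) : UQuantale (X ⟶ X) :=
  { QuantaloidStruct.homLattice X X with
    mul := fun f g => g ≫ f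
    one := 𝟙 X
    mul_assoc := fun f g h => (Category.assoc h g f).symm
    one_mul := fun f => Category.comp_id f
    mul_one := fun f => Category.id_comp f
    mul_sSup := fun a s => sSup_comp s a
    sSup_mul := fun s b => comp_sSup b s }

theorem end_mul_def (X : Q) (f g : X ⟶ X) : f * g = g ≫ f := rfl

end Quantaloid

/-! ### STATEMENT 1 -/

section Statement1

open Limits

variable {Q : Type u} [Category.{v} Q] [Quantaloid Q]

/-- For an object `Qo` of a quantaloid, `Hom(Qo, A)` is a right module over the
endomorphism quantale `E = Hom(Qo,Qo)`, the action being given by precomposition. -/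
def homModule (Qo A : Q) : QMod.{v, v} (Qo ⟶ Qo) where
  carrier := Qo ⟶ A
  latt := QuantaloidStruct.homLattice Qo A
  act m e := e ≫ m
  act_one m := Category.id_comp m
  act_mul m a b := by
    show (b ≫ a) ≫ m = b ≫ (a ≫ m)
    rw [Category.assoc]
  sSup_act s a := Quantaloid.comp_sSup a s
  act_sSup m s := Quantaloid.sSup_comp s m

/-- The functor `K^Q : Q ⥤ Mod_E(Sl)`, `A ↦ Hom(Qo, A)`, where `E = Hom(Qo,Qo)`. -/
def KQ (Qo : Q) : Q ⥤ QMod.{v, v} (Qo ⟶ Qo) where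
  obj A := homModule Qo A
  map {A B} f :=
    ⟨fun m => m ≫ f,
      ⟨fun s => Quantaloid.sSup_comp s f, fun m e => Category.assoc e m f⟩⟩
  map_id A := Subtype.ext (funext fun m => Category.comp_id m)
  map_comp f g := Subtype.ext (funext fun m => (Category.assoc m f g).symm)

/-!
In a quantaloid a copower `∐ _ : X, Qo` is also a product: with `π x` the map that is `𝟙` on the
`x`-th summand and `⊥` elsewhere, `⨆ x, π x ≫ ι x = 𝟙`. So a morphism `m : Qo ⟶ ∐ _ : X, Qo` is a
formal supremum `⨆ x, (m ≫ π x) ≫ ι x` of elements of `X` with coefficients in `E = Hom(Qo, Qo)`,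
and the algebras of the monad `X ↦ Hom(Qo, ∐ _ : X, Qo)` of the adjunction `∐ _ : -, Qo ⊣ Q(Qo, -)`
are the right `E`-modules: a module evaluates formal suprema, and the structure map `a` of an
algebra defines suprema `a (⨆ x ∈ s, ι x)` and the action `x · e = a (e ≫ ι x)`. This equivalence
turns `K^Q` into the comparison functor of the adjunction, and whether a comparison functor is an
equivalence does not depend on the choice of the left adjoint.
-/

/-- The complete lattice whose suprema are an algebra `sup` of the powerset monad, ordered by
`x ≤ y ↔ sup {x, y} = y`. -/
abbrev completeLatticeOfPowersetAlgebra {α : Type*} (sup : Set α → α)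
    (sup_singleton : ∀ x, sup {x} = x)
    (sup_sUnion : ∀ S : Set (Set α), sup (⋃₀ S) = sup (sup '' S)) : CompleteLattice α :=
  have sup_union (s t : Set α) : sup (s ∪ t) = sup {sup s, sup t} := by
    simpa [Set.image_pair] using sup_sUnion {s, t}
  letI : PartialOrder α :=
    { le x y := sup {x, y} = y
      le_refl x := by simp only [Set.pair_eq_singleton, sup_singleton]
      le_trans x y z (hxy : sup {x, y} = y) (hyz : sup {y, z} = z) := by
        calc sup {x, z} = sup ({x} ∪ {y, z}) := by rw [sup_union, sup_singleton, hyz]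
          _ = sup ({x, y} ∪ {z}) := by
            rw [Set.singleton_union, Set.insert_union, Set.singleton_union]
          _ = z := by rw [sup_union, hxy, sup_singleton, hyz]
      le_antisymm x y (hxy : sup {x, y} = y) (hyx : sup {y, x} = x) := by
        rw [← hxy, Set.pair_comm, hyx] }
  letI : SupSet α := ⟨sup⟩
  completeLatticeOfSup α fun s =>
    ⟨fun x hx => show sup {x, sup s} = sup s by
        rw [← sup_singleton x, ← sup_union, Set.singleton_union, Set.insert_eq_of_mem hx],
      fun y hy => show sup {sup s, y} = y by
        have hcover : s ∪ {y} = ⋃₀ insert {y} ((fun x => {x, y}) '' s) := by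
          ext z; aesop
        have himage : sup '' insert {y} ((fun x => {x, y}) '' s) = {y} := by
          have hy' : ∀ x ∈ s, sup {x, y} = y := hy
          ext z; aesop
        rw [← sup_singleton y, ← sup_union, sup_singleton, hcover, sup_sUnion, himage,
          sup_singleton]⟩

noncomputable def CategoryTheory.Adjunction.toMonadUniq {C D : Type*} [Category C] [Category D]
    {L L' : C ⥤ D} {R : D ⥤ C} (adj : L ⊣ R) (adj' : L' ⊣ R) : adj.toMonad ≅ adj'.toMonad :=
  MonadIso.mk (Functor.isoWhiskerRight (adj.leftAdjointUniq adj') R)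
    (fun X => adj.unit_leftAdjointUniq_hom_app adj' X)
    (fun X => by
      dsimp [Adjunction.toMonad]
      rw [← R.map_comp, ← R.map_comp, ← R.map_comp, Category.assoc,
        Adjunction.leftAdjointUniq_hom_app_counit, Adjunction.counit_naturality])

noncomputable def CategoryTheory.Monad.comparisonIsoOfLeftAdjointUniq {C D : Type*} [Category C]
    [Category D] {L L' : C ⥤ D} {R : D ⥤ C} (adj : L ⊣ R) (adj' : L' ⊣ R) :
    Monad.comparison adj' ⋙ (Monad.algebraEquivOfIsoMonads (adj.toMonadUniq adj')).inverse ≅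
      Monad.comparison adj :=
  NatIso.ofComponents (fun X => Monad.Algebra.isoMk (Iso.refl _) (by
    show adj.toMonad.map (𝟙 _) ≫ R.map (adj.counit.app X) =
      (R.map ((adj.leftAdjointUniq adj').hom.app (R.obj X)) ≫ R.map (adj'.counit.app X)) ≫ 𝟙 _
    rw [← R.map_comp, Adjunction.leftAdjointUniq_hom_app_counit, Functor.map_id]
    exact (Category.id_comp _).trans (Category.comp_id _).symm))
    (fun f => by ext; exact (Category.comp_id _).trans (Category.id_comp _).symm)

theorem CategoryTheory.Monad.comparison_isEquivalence_iff {C D : Type*} [Category C] [Category D]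
    {L L' : C ⥤ D} {R : D ⥤ C} (adj : L ⊣ R) (adj' : L' ⊣ R) :
    (Monad.comparison adj).IsEquivalence ↔ (Monad.comparison adj').IsEquivalence := by
  rw [← Functor.isEquivalence_iff_of_iso (Monad.comparisonIsoOfLeftAdjointUniq adj adj')]
  exact ⟨fun _ => Functor.isEquivalence_of_comp_right _
    (Monad.algebraEquivOfIsoMonads (adj.toMonadUniq adj')).inverse, fun _ => inferInstance⟩

theorem CategoryTheory.nonempty_monadicRightAdjoint_iff {C D : Type*} [Category C] [Category D]
    {L : C ⥤ D} {R : D ⥤ C} (adj : L ⊣ R) :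
    Nonempty (MonadicRightAdjoint R) ↔ (Monad.comparison adj).IsEquivalence :=
  ⟨fun ⟨_⟩ => (Monad.comparison_isEquivalence_iff adj (monadicAdjunction R)).2 inferInstance,
    fun h => ⟨⟨L, adj, h⟩⟩⟩

section CopowerAdjunction

variable {C : Type u} [Category.{v} C] (Qo : C) [∀ X : Type v, HasCoproduct fun _ : X => Qo]

noncomputable def copowerFunctor : Type v ⥤ C where
  obj X := ∐ fun _ : X => Qo
  map f := Sigma.desc fun x => Sigma.ι (fun _ => Qo) (f x)

noncomputable def copowerAdj : copowerFunctor Qo ⊣ coyoneda.obj (Opposite.op Qo) where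
  unit :=
    { app X := ↾fun x => Sigma.ι (fun _ : X => Qo) x
      naturality _ _ f := by ext x; exact (Sigma.ι_desc _ x).symm }
  counit :=
    { app A := Sigma.desc fun g : Qo ⟶ A => g
      naturality _ _ f := Sigma.hom_ext _ _ fun g => by
        erw [Sigma.ι_desc_assoc, Sigma.ι_desc, Sigma.ι_desc_assoc]; rfl }
  left_triangle_components X := Sigma.hom_ext _ _ fun x => by
    erw [Sigma.ι_desc_assoc, Sigma.ι_desc, Category.comp_id]; rfl
  right_triangle_components A := by ext g; exact Sigma.ι_desc _ g

noncomputable abbrev copowerMonad : Monad (Type v) := (copowerAdj Qo).toMonad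

end CopowerAdjunction

theorem Quantaloid.bot_comp {X Y Z : Q} (g : Y ⟶ Z) : (⊥ : X ⟶ Y) ≫ g = ⊥ := by
  simpa using Quantaloid.sSup_comp (∅ : Set (X ⟶ Y)) g

theorem Quantaloid.comp_bot {X Y Z : Q} (f : X ⟶ Y) : f ≫ (⊥ : Y ⟶ Z) = ⊥ := by
  simpa using Quantaloid.comp_sSup f (∅ : Set (Y ⟶ Z))

theorem QMod.act_bot {A : Type u} [UQuantale A] (M : QMod.{u, w} A) (m : M.carrier) :
    M.act m ⊥ = ⊥ := by
  simpa using M.act_sSup m (∅ : Set A)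

section CopowerBiproduct

variable (Qo : Q) [∀ X : Type v, HasCoproduct fun _ : X => Qo]

open Classical in
noncomputable def copowerProj {X : Type v} (x : X) : (∐ fun _ : X => Qo) ⟶ Qo :=
  Sigma.desc fun y => if y = x then 𝟙 Qo else ⊥

open Classical in
theorem ι_copowerProj {X : Type v} (y x : X) :
    Sigma.ι (fun _ : X => Qo) y ≫ copowerProj Qo x = if y = x then 𝟙 Qo else ⊥ :=
  Sigma.ι_desc _ y

theorem iSup_copowerProj_comp_ι {X : Type v} :
    ⨆ x : X, copowerProj Qo x ≫ Sigma.ι (fun _ : X => Qo) x = 𝟙 _ := by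
  classical
  refine Sigma.hom_ext _ _ fun y => ?_
  rw [Quantaloid.comp_iSup, Category.comp_id]
  simp only [← Category.assoc, ι_copowerProj]
  refine le_antisymm (iSup_le fun x => ?_) (le_iSup_of_le y (by simp))
  split_ifs with h
  · subst h; simp
  · simp [Quantaloid.bot_comp]

theorem iSup_comp_copowerProj_comp_ι {X : Type v} {W : Q} (m : W ⟶ ∐ fun _ : X => Qo) :
    ⨆ x, (m ≫ copowerProj Qo x) ≫ Sigma.ι (fun _ : X => Qo) x = m := by
  simp only [Category.assoc, ← Quantaloid.comp_iSup, iSup_copowerProj_comp_ι, Category.comp_id]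

theorem comp_desc_eq_iSup {X : Type v} {W A : Q} (m : W ⟶ ∐ fun _ : X => Qo)
    (f : X → (Qo ⟶ A)) : m ≫ Sigma.desc f = ⨆ x, (m ≫ copowerProj Qo x) ≫ f x := by
  conv_lhs => rw [← iSup_comp_copowerProj_comp_ι Qo m]
  simp only [Quantaloid.iSup_comp, Category.assoc, Sigma.ι_desc]

end CopowerBiproduct

namespace QMod

variable {Qo : Q} [∀ X : Type v, HasCoproduct fun _ : X => Qo] (M : QMod.{v, v} (Qo ⟶ Qo))

noncomputable def copowerStr (m : Qo ⟶ ∐ fun _ : M.carrier => Qo) : M.carrier :=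
  ⨆ x, M.act x (m ≫ copowerProj Qo x)

theorem copowerStr_iSup {ι : Sort w} (m : ι → (Qo ⟶ ∐ fun _ : M.carrier => Qo)) :
    M.copowerStr (⨆ i, m i) = ⨆ i, M.copowerStr (m i) := by
  simp only [copowerStr, Quantaloid.iSup_comp, act_iSup]
  exact iSup_comm

theorem copowerStr_comp_ι (x : M.carrier) (e : Qo ⟶ Qo) :
    M.copowerStr (e ≫ Sigma.ι (fun _ : M.carrier => Qo) x) = M.act x e := by
  classical
  refine le_antisymm (iSup_le fun y => ?_) (le_iSup_of_le x ?_)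
  · rw [Category.assoc, ι_copowerProj]
    split_ifs with h
    · subst h; rw [Category.comp_id]
    · rw [Quantaloid.comp_bot, act_bot]; exact bot_le
  · rw [Category.assoc, ι_copowerProj, if_pos rfl, Category.comp_id]

theorem copowerStr_ι (x : M.carrier) :
    M.copowerStr (Sigma.ι (fun _ : M.carrier => Qo) x) = x := by
  rw [← Category.id_comp (Sigma.ι _ x), copowerStr_comp_ι]
  exact M.act_one x

theorem copowerStr_comp (e : Qo ⟶ Qo) (m : Qo ⟶ ∐ fun _ : M.carrier => Qo) :
    M.copowerStr (e ≫ m) = M.act (M.copowerStr m) e := by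
  simp only [copowerStr, iSup_act, ← act_mul, Quantaloid.end_mul_def, Category.assoc]

theorem copowerStr_comp_desc {X : Type v} (g : X → M.carrier) (m : Qo ⟶ ∐ fun _ : X => Qo) :
    M.copowerStr (m ≫ Sigma.desc fun x => Sigma.ι (fun _ : M.carrier => Qo) (g x)) =
      ⨆ x, M.act (g x) (m ≫ copowerProj Qo x) := by
  simp only [comp_desc_eq_iSup, copowerStr_iSup, copowerStr_comp_ι]

theorem copowerStr_assoc (m : Qo ⟶ ∐ fun _ : (Qo ⟶ ∐ fun _ : M.carrier => Qo) => Qo) :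
    M.copowerStr (m ≫ Sigma.desc fun g => g) =
      M.copowerStr
        (m ≫ Sigma.desc fun g => Sigma.ι (fun _ : M.carrier => Qo) (M.copowerStr g)) := by
  rw [copowerStr_comp_desc, comp_desc_eq_iSup, copowerStr_iSup]
  simp only [copowerStr_comp]

noncomputable def toCopowerAlgebra : (copowerMonad Qo).Algebra where
  A := M.carrier
  a := ↾M.copowerStr
  unit := by ext x; exact M.copowerStr_ι x
  assoc := by ext m; exact M.copowerStr_assoc m

theorem copowerStr_comp_desc_hom {M N : QMod.{v, v} (Qo ⟶ Qo)} (f : M ⟶ N)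
    (m : Qo ⟶ ∐ fun _ : M.carrier => Qo) :
    N.copowerStr (m ≫ Sigma.desc fun x => Sigma.ι (fun _ : N.carrier => Qo) (f.1 x)) =
      f.1 (M.copowerStr m) := by
  rw [copowerStr_comp_desc, copowerStr, hom_iSup]
  exact iSup_congr fun x => (f.2.2 x _).symm

theorem isHom_of_copowerStr_comp_desc {M N : QMod.{v, v} (Qo ⟶ Qo)} (f : M.carrier → N.carrier)
    (hf : ∀ m, N.copowerStr (m ≫ Sigma.desc fun x => Sigma.ι (fun _ : N.carrier => Qo) (f x)) =
      f (M.copowerStr m)) :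
    IsHom M N f := by
  constructor
  · intro s
    have hs : sSup s = M.copowerStr (⨆ x ∈ s, Sigma.ι (fun _ : M.carrier => Qo) x) := by
      simp only [copowerStr_iSup, copowerStr_ι, sSup_eq_iSup]
    rw [hs, ← hf]
    simp only [Quantaloid.iSup_comp, Sigma.ι_desc, copowerStr_iSup, copowerStr_ι]
  · intro x e
    rw [← copowerStr_comp_ι, ← hf, Category.assoc, Sigma.ι_desc, copowerStr_comp_ι]

end QMod

namespace CopowerAlgebra

section

variable {C : Type u} [Category.{v} C] {Qo : C} [∀ X : Type v, HasCoproduct fun _ : X => Qo]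
  (A : (copowerMonad Qo).Algebra)

/-- `A.a`, with its domain unfolded to `Qo ⟶ ∐ _ : A.A, Qo`. -/
noncomputable def str : (Qo ⟶ ∐ fun _ : A.A => Qo) → A.A := A.a

theorem str_ι (x : A.A) : str A (Sigma.ι (fun _ : A.A => Qo) x) = x :=
  ConcreteCategory.congr_hom A.unit x

end

variable {Qo : Q} [∀ X : Type v, HasCoproduct fun _ : X => Qo] (A : (copowerMonad Qo).Algebra)

theorem str_iSup_comp_ι_str {ι : Sort w} (e : ι → (Qo ⟶ Qo))
    (m : ι → (Qo ⟶ ∐ fun _ : A.A => Qo)) :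
    str A (⨆ i, e i ≫ Sigma.ι (fun _ : A.A => Qo) (str A (m i))) = str A (⨆ i, e i ≫ m i) := by
  let W : Qo ⟶ ∐ fun _ : (Qo ⟶ ∐ fun _ : A.A => Qo) => Qo :=
    ⨆ i, e i ≫ Sigma.ι (fun _ : (Qo ⟶ ∐ fun _ : A.A => Qo) => Qo) (m i)
  have h : str A (W ≫ Sigma.desc fun g => g) =
      str A (W ≫ Sigma.desc fun g => Sigma.ι (fun _ : A.A => Qo) (str A g)) :=
    ConcreteCategory.congr_hom A.assoc W
  simpa only [W, Quantaloid.iSup_comp, Category.assoc, Sigma.ι_desc] using h.symm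

theorem str_iSup_ι_str {ι : Sort w} (m : ι → (Qo ⟶ ∐ fun _ : A.A => Qo)) :
    str A (⨆ i, Sigma.ι (fun _ : A.A => Qo) (str A (m i))) = str A (⨆ i, m i) := by
  simpa only [Category.id_comp] using str_iSup_comp_ι_str A (fun _ => 𝟙 Qo) m

theorem str_comp_ι_str (e : Qo ⟶ Qo) (m : Qo ⟶ ∐ fun _ : A.A => Qo) :
    str A (e ≫ Sigma.ι (fun _ : A.A => Qo) (str A m)) = str A (e ≫ m) := by
  simpa only [iSup_const] using str_iSup_comp_ι_str A (fun _ : Unit => e) (fun _ => m)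

noncomputable def sup (s : Set A.A) : A.A :=
  str A (⨆ x ∈ s, Sigma.ι (fun _ : A.A => Qo) x)

theorem sup_singleton (x : A.A) : sup A {x} = x := by
  rw [sup, iSup_singleton, str_ι]

theorem sup_sUnion (S : Set (Set A.A)) : sup A (⋃₀ S) = sup A (sup A '' S) := by
  simp only [sup, iSup_sUnion, iSup_image]
  rw [iSup_subtype', iSup_subtype', str_iSup_ι_str]

noncomputable instance : CompleteLattice A.A :=
  completeLatticeOfPowersetAlgebra (sup A) (sup_singleton A) (sup_sUnion A)

theorem iSup_eq_str {ι : Sort w} (f : ι → A.A) :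
    ⨆ i, f i = str A (⨆ i, Sigma.ι (fun _ : A.A => Qo) (f i)) := by
  show sup A (Set.range f) = _
  rw [sup, iSup_range]

noncomputable def toModule : QMod.{v, v} (Qo ⟶ Qo) where
  carrier := A.A
  act x e := str A (e ≫ Sigma.ι (fun _ : A.A => Qo) x)
  act_one x := (congrArg (str A) (Category.id_comp _)).trans (str_ι A x)
  act_mul x a b := by
    rw [str_comp_ι_str, Quantaloid.end_mul_def, Category.assoc]
  sSup_act s e := by
    rw [iSup_subtype', iSup_eq_str, str_iSup_ι_str, sSup_eq_iSup', iSup_eq_str, str_comp_ι_str,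
      Quantaloid.comp_iSup]
  act_sSup x u := by
    rw [iSup_subtype', iSup_eq_str, str_iSup_ι_str, sSup_eq_iSup', Quantaloid.iSup_comp]

theorem copowerStr_toModule (m : Qo ⟶ ∐ fun _ : A.A => Qo) :
    (toModule A).copowerStr m = str A m := by
  show ⨆ x, str A ((m ≫ copowerProj Qo x) ≫ Sigma.ι (fun _ : A.A => Qo) x) = str A m
  rw [iSup_eq_str, str_iSup_ι_str, iSup_comp_copowerProj_comp_ι]

end CopowerAlgebra

section ModulesAsAlgebras

variable (Qo : Q) [∀ X : Type v, HasCoproduct fun _ : X => Qo]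

noncomputable def moduleToAlgebra : QMod.{v, v} (Qo ⟶ Qo) ⥤ (copowerMonad Qo).Algebra where
  obj M := M.toCopowerAlgebra
  map f :=
    { f := ↾f.1
      h := by ext m; exact QMod.copowerStr_comp_desc_hom f m }

instance : (moduleToAlgebra Qo).Faithful where
  map_injective h :=
    Subtype.ext (funext fun x => ConcreteCategory.congr_hom (congrArg Monad.Algebra.Hom.f h) x)

instance : (moduleToAlgebra Qo).Full where
  map_surjective h :=
    ⟨⟨h.f, QMod.isHom_of_copowerStr_comp_desc _ fun m => ConcreteCategory.congr_hom h.h m⟩, rfl⟩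

instance : (moduleToAlgebra Qo).EssSurj where
  mem_essImage A := ⟨CopowerAlgebra.toModule A, ⟨Monad.Algebra.isoMk (Iso.refl _) (by
    ext m
    have hm : (copowerMonad Qo).map (𝟙 A.A) m = m :=
      ConcreteCategory.congr_hom ((copowerMonad Qo).map_id _) m
    exact (congrArg A.a hm).trans (CopowerAlgebra.copowerStr_toModule A m).symm)⟩⟩

instance : (moduleToAlgebra Qo).IsEquivalence where

theorem copowerStr_homModule (A : Q) (m : Qo ⟶ ∐ fun _ : (Qo ⟶ A) => Qo) :
    (homModule Qo A).copowerStr m = m ≫ Sigma.desc fun g => g :=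
  (comp_desc_eq_iSup Qo m _).symm

noncomputable def comparisonIsoKQ :
    Monad.comparison (copowerAdj Qo) ≅ KQ Qo ⋙ moduleToAlgebra Qo :=
  NatIso.ofComponents
    (fun A => Monad.Algebra.isoMk (Iso.refl _) (by
      ext m
      have hm : (copowerMonad Qo).map (𝟙 (Qo ⟶ A)) m = m :=
        ConcreteCategory.congr_hom ((copowerMonad Qo).map_id _) m
      exact (congrArg (homModule Qo A).copowerStr hm).trans (copowerStr_homModule Qo A m)))
    (fun f => by ext; rfl)

end ModulesAsAlgebras

/-- if the quantaloid `Q` admits all set-indexed copowers of `Qo`, then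
the functor `K^Q : Q ⥤ Mod_E(Sl)` is an equivalence of categories if and only if the
hom functor `Q(Qo, -) : Q ⥤ Set` is monadic. -/
theorem KQ_isEquivalence_iff_monadic (Qo : Q)
    (hcop : ∀ X : Type v, HasCoproduct (fun _ : X => Qo)) :
    (KQ Qo).IsEquivalence ↔
      Nonempty (MonadicRightAdjoint (coyoneda.obj (Opposite.op Qo))) := by
  rw [nonempty_monadicRightAdjoint_iff (copowerAdj Qo),
    Functor.isEquivalence_iff_of_iso (comparisonIsoKQ Qo)]
  exact ⟨fun _ => inferInstance,
    fun _ => Functor.isEquivalence_of_comp_right _ (moduleToAlgebra Qo)⟩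

end Statement1
end

section
/- Let Q be a quantaloid and Q an object of Q such that all set-indexed copowers Q^(X) (coproducts of X copies of Q) exist in Q. Then Q is self-small: for every set X, the canonical comparison morphism Hom_Q(Q,Q)^(X) → Hom_Q(Q, Q^(X)) (the unique morphism whose composite with the x-th coproduct injection equals Hom_Q(Q, ι_x), where ι_x : Q → Q^(X) is the x-th coproduct injection) is an isomorphism. Consequently the functor Hom_Q(Q,−) : Q → Sl commutes with arbitrary set-indexed coproducts of copies of Q. -/
open CategoryTheory Set

universe u v w

section Statement2

open Limits

variable {Q : Type u} [Category.{v} Q] [Quantaloid Q]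

/-- The canonical comparison morphism `Hom(Qo,Qo)^(X) ⟶ Hom(Qo, Qo^(X))` in the
category of sup-lattices.  The copower (= biproduct) of `X` copies of the sup-lattice
`Hom(Qo,Qo)` is the function sup-lattice `X → (Qo ⟶ Qo)`, and the comparison morphism
sends a family `e` to `⨆ x, e x ≫ ι_x`.  It is the unique sup-preserving map whose
composite with the `x`-th coproduct injection `f ↦ (fun y => ⨆ _ : y = x, f)` of the
copower equals `Hom(Qo, ι_x) = (· ≫ ι_x)`. -/
noncomputable def copowerComparison (Qo : Q) (X : Type v) [HasCoproduct (fun _ : X => Qo)] :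
    (X → (Qo ⟶ Qo)) → (Qo ⟶ ∐ fun _ : X => Qo) :=
  fun e => ⨆ x, e x ≫ Sigma.ι (fun _ : X => Qo) x

/-!
Coproducts in a quantaloid are biproducts. The `x`-th projection `π_x : ∐ F ⟶ F x` is induced
by the Kronecker family `ι_y ↦ ⨆ _ : y = x, 𝟙`, which is `𝟙` for `y = x` and `⊥` otherwise.
Since composition preserves suprema, `⨆ x, π_x ≫ ι_x = 𝟙`, so `f ↦ (f ≫ π_x)_x` inverts
the comparison map `e ↦ ⨆ x, e x ≫ ι_x`, which preserves suprema for the same reason.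
-/

namespace Quantaloid

variable {ι : Type w}

noncomputable def coproductπ (F : ι → Q) [HasCoproduct F] (x : ι) : ∐ F ⟶ F x :=
  Sigma.desc fun y => ⨆ h : y = x, eqToHom (congrArg F h)

variable (F : ι → Q) [HasCoproduct F]

@[simp]
theorem ι_coproductπ (y x : ι) :
    Sigma.ι F y ≫ coproductπ F x = ⨆ h : y = x, eqToHom (congrArg F h) :=
  Sigma.ι_desc _ _

theorem iSup_comp_ι_comp_coproductπ {W : Q} (e : ∀ y, W ⟶ F y) (x : ι) :
    (⨆ y, e y ≫ Sigma.ι F y) ≫ coproductπ F x = e x := by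
  rw [iSup_comp]
  calc ⨆ y, (e y ≫ Sigma.ι F y) ≫ coproductπ F x
      = ⨆ y, ⨆ h : y = x, e y ≫ eqToHom (congrArg F h) := by
        simp only [Category.assoc, ι_coproductπ, comp_iSup]
    _ = e x := by rw [iSup_iSup_eq_left, eqToHom_refl, Category.comp_id]

theorem iSup_coproductπ_comp_ι : ⨆ x, coproductπ F x ≫ Sigma.ι F x = 𝟙 (∐ F) := by
  refine Sigma.hom_ext _ _ fun y => ?_
  calc Sigma.ι F y ≫ ⨆ x, coproductπ F x ≫ Sigma.ι F x
      = ⨆ x, ⨆ h : y = x, eqToHom (congrArg F h) ≫ Sigma.ι F x := by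
        simp only [comp_iSup, ← Category.assoc, ι_coproductπ, iSup_comp]
    _ = Sigma.ι F y ≫ 𝟙 (∐ F) := by
        rw [iSup_iSup_eq_right, eqToHom_refl, Category.id_comp, Category.comp_id]

noncomputable def coproductHomEquiv (W : Q) : (∀ x, W ⟶ F x) ≃ (W ⟶ ∐ F) where
  toFun e := ⨆ x, e x ≫ Sigma.ι F x
  invFun f x := f ≫ coproductπ F x
  left_inv e := funext (iSup_comp_ι_comp_coproductπ F e)
  right_inv f := by
    simp only [Category.assoc, ← comp_iSup, iSup_coproductπ_comp_ι, Category.comp_id]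

theorem coproductHomEquiv_sSup {W : Q} (s : Set (∀ x, W ⟶ F x)) :
    coproductHomEquiv F W (sSup s) = ⨆ e ∈ s, coproductHomEquiv F W e :=
  calc ⨆ x, sSup s x ≫ Sigma.ι F x
      = ⨆ x, ⨆ e : s, (e : ∀ x, W ⟶ F x) x ≫ Sigma.ι F x := by
        simp only [sSup_apply, iSup_comp]
    _ = ⨆ e : s, coproductHomEquiv F W e := iSup_comm
    _ = ⨆ e ∈ s, coproductHomEquiv F W e := iSup_subtype'' s _

end Quantaloid

theorem self_small_general (Qo : Q)
    (X : Type v) [HasCoproduct (fun _ : X => Qo)] :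
    (∀ (x : X) (f : Qo ⟶ Qo),
      copowerComparison Qo X (fun y => ⨆ _ : y = x, f) = f ≫ Sigma.ι (fun _ : X => Qo) x) ∧
    (∀ s : Set (X → (Qo ⟶ Qo)),
      copowerComparison Qo X (sSup s) = ⨆ e ∈ s, copowerComparison Qo X e) ∧
    Function.Bijective (copowerComparison Qo X) := by
  refine ⟨fun x f => ?_, Quantaloid.coproductHomEquiv_sSup _,
    (Quantaloid.coproductHomEquiv _ Qo).bijective⟩
  simp only [copowerComparison, Quantaloid.iSup_comp, iSup_iSup_eq_left]

/-- every object `Qo` of a quantaloid admitting set-indexed copowers is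
self-small: for every set `X` the canonical comparison morphism
`Hom(Qo,Qo)^(X) ⟶ Hom(Qo, Qo^(X))` is an isomorphism of sup-lattices; that is, it is
the (unique) sup-preserving map whose composites with the coproduct injections are the
maps `Hom(Qo, ι_x)`, and it is bijective.  Consequently `Hom(Qo,-)` commutes with
arbitrary set-indexed coproducts of copies of `Qo`. -/
theorem self_small (Qo : Q) (hcop : ∀ X : Type v, HasCoproduct (fun _ : X => Qo))
    (X : Type v) [HasCoproduct (fun _ : X => Qo)] :
    (∀ (x : X) (f : Qo ⟶ Qo),
      copowerComparison Qo X (fun y => ⨆ _ : y = x, f) = f ≫ Sigma.ι (fun _ : X => Qo) x) ∧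
    (∀ s : Set (X → (Qo ⟶ Qo)),
      copowerComparison Qo X (sSup s) = ⨆ e ∈ s, copowerComparison Qo X e) ∧
    Function.Bijective (copowerComparison Qo X) :=
  self_small_general Qo X

end Statement2
end

section
/- For any small quantaloid Q, the category of Sl-enriched functors from Q to Sl and Sl-natural transformations between them is equivalent to the category Mod_E(Sl) of right modules over a quantale; explicitly, one may take E to be the endomorphism quantale of the Sl-functor Q = ⊕_{X ∈ Q} Q(X,−), the biproduct over all objects X of Q of the representable Sl-functors. -/
/-!
Write `P = ⊕_X Q(X, -)` and `E = End P`. By Yoneda, an element `x ∈ F X` is the same as a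
transformation `P ⟶ F` killing all summands but the `X`-th, and the idempotents projecting
onto the summands have supremum `𝟙 P`. Hence `Hom(P, -)` is full and faithful into right
`E`-modules, a module morphism being determined by where it sends these elementary
transformations. A right `E`-module `M` is recovered, up to isomorphism, as `Hom(P, Ψ M)` with
`Ψ M Y = M · e_Y`, where `e_Y` is the idempotent of the `Y`-th summand.
-/

open CategoryTheory Set

universe u v w

/-! ### STATEMENT 5 -/

section Statement5

/-- A bundled sup-lattice (an object of the category `Sl`). -/
structure SupLat : Type (u + 1) where
  carrier : Type u
  [latt : CompleteLattice carrier]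

attribute [instance] SupLat.latt

variable (Q : Type u) [Category.{u} Q] [Quantaloid Q]

/-- An `Sl`-enriched functor from a small quantaloid `Q` to the category `Sl` of
sup-lattices: it assigns a sup-lattice to each object, a sup-preserving map to each
morphism, functorially, and its action on each hom-sup-lattice is sup-preserving. -/
structure SlFunctor : Type (u + 1) where
  obj : Q → SupLat.{u}
  map : ∀ {X Y : Q}, (X ⟶ Y) → (obj X).carrier → (obj Y).carrier
  map_sSup : ∀ {X Y : Q} (f : X ⟶ Y) (s : Set (obj X).carrier),
    map f (sSup s) = ⨆ m ∈ s, map f m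
  map_id : ∀ X : Q, map (𝟙 X) = id
  map_comp : ∀ {X Y Z : Q} (f : X ⟶ Y) (g : Y ⟶ Z), map (f ≫ g) = map g ∘ map f
  sSup_map : ∀ {X Y : Q} (s : Set (X ⟶ Y)) (m : (obj X).carrier),
    map (sSup s) m = ⨆ f ∈ s, map f m

variable {Q}

theorem SlFunctor.map_iSup (F : SlFunctor Q) {X Y : Q} (f : X ⟶ Y) {ι : Sort w}
    (g : ι → (F.obj X).carrier) : F.map f (⨆ i, g i) = ⨆ i, F.map f (g i) := by
  rw [iSup, F.map_sSup]; exact iSup_range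

/-- `Sl`-natural transformations between `Sl`-functors: families of sup-preserving
maps satisfying the naturality equations. -/
def IsSlNat (F G : SlFunctor Q) (α : ∀ X : Q, (F.obj X).carrier → (G.obj X).carrier) :
    Prop :=
  (∀ (X : Q) (s : Set (F.obj X).carrier), α X (sSup s) = ⨆ m ∈ s, α X m) ∧
  (∀ {X Y : Q} (f : X ⟶ Y) (m : (F.obj X).carrier), α Y (F.map f m) = G.map f (α X m))

/-- The category of `Sl`-functors and `Sl`-natural transformations from `Q` to `Sl`. -/
instance : Category.{u} (SlFunctor Q) where
  Hom F G := { α : ∀ X : Q, (F.obj X).carrier → (G.obj X).carrier // IsSlNat F G α }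
  id F := ⟨fun _ => id, ⟨fun X s => by simp [sSup_eq_iSup], fun _ _ => rfl⟩⟩
  comp {F G H} α β :=
    ⟨fun X => β.1 X ∘ α.1 X, by
      constructor
      · intro X s
        show β.1 X (α.1 X (sSup s)) = _
        rw [α.2.1, ← sSup_image, β.2.1, iSup_image]
        rfl
      · intro X Y f m
        show β.1 Y (α.1 Y (F.map f m)) = _
        rw [α.2.2, β.2.2]
        rfl⟩
  id_comp _ := Subtype.ext rfl
  comp_id _ := Subtype.ext rfl
  assoc _ _ _ := Subtype.ext rfl

theorem slNat_iSup {F G : SlFunctor Q} (β : F ⟶ G) (X : Q) {ι : Sort w}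
    (g : ι → (F.obj X).carrier) : β.1 X (⨆ i, g i) = ⨆ i, β.1 X (g i) := by
  rw [iSup, β.2.1, iSup_range]

theorem isSlNat_biSup {F G : SlFunctor Q} (s : Set (F ⟶ G)) :
    IsSlNat F G (fun X m => ⨆ β ∈ s, β.1 X m) := by
  constructor
  · intro X t
    calc (⨆ β ∈ s, β.1 X (sSup t)) = ⨆ β ∈ s, ⨆ m ∈ t, β.1 X m :=
          iSup_congr fun β => iSup_congr fun _ => β.2.1 X t
      _ = ⨆ m ∈ t, ⨆ β ∈ s, β.1 X m := iSup₂_comm _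
  · intro X Y f m
    simp only [SlFunctor.map_iSup]
    exact iSup_congr fun β => iSup_congr fun _ => β.2.2 f m

instance slHomSupSet (F G : SlFunctor Q) : SupSet (F ⟶ G) :=
  ⟨fun s => ⟨fun X m => ⨆ β ∈ s, β.1 X m, isSlNat_biSup s⟩⟩

instance slHomPartialOrder (F G : SlFunctor Q) : PartialOrder (F ⟶ G) :=
  inferInstanceAs (PartialOrder
    { α : ∀ X : Q, (F.obj X).carrier → (G.obj X).carrier // IsSlNat F G α })

instance slHomCompleteLattice (F G : SlFunctor Q) : CompleteLattice (F ⟶ G) :=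
  completeLatticeOfSup _ (fun s => by
    constructor
    · intro β hβ X m
      exact le_iSup₂ (f := fun (β : F ⟶ G) (_ : β ∈ s) => β.1 X m) β hβ
    · intro γ hγ X m
      exact iSup₂_le fun β hβ => hγ hβ X m)

theorem slHom_sSup_apply {F G : SlFunctor Q} (s : Set (F ⟶ G)) (X : Q)
    (m : (F.obj X).carrier) : (sSup s).1 X m = ⨆ β ∈ s, β.1 X m := rfl

theorem slHom_iSup_apply {F G : SlFunctor Q} {ι : Sort w} (h : ι → (F ⟶ G)) (X : Q)
    (m : (F.obj X).carrier) : (⨆ i, h i).1 X m = ⨆ i, (h i).1 X m := by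
  rw [iSup]
  show ⨆ β ∈ Set.range h, β.1 X m = _
  exact iSup_range

/-- The category of `Sl`-functors and `Sl`-natural transformations is itself a
quantaloid (suprema of natural transformations are computed pointwise). -/
instance : Quantaloid (SlFunctor Q) where
  homLattice F G := slHomCompleteLattice F G
  comp_sSup {F G H} α s := by
    apply Subtype.ext
    funext X m
    show (sSup s).1 X (α.1 X m) = (⨆ g ∈ s, α ≫ g).1 X m
    rw [slHom_sSup_apply]
    simp only [slHom_iSup_apply]
    rfl
  sSup_comp {F G H} s β := by
    apply Subtype.ext
    funext X m
    show β.1 X ((sSup s).1 X m) = (⨆ α ∈ s, α ≫ β).1 X m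
    rw [slHom_sSup_apply]
    simp only [slNat_iSup, slHom_iSup_apply]
    rfl

variable (Q)

/-- The `Sl`-functor `⊕_{X ∈ Q} Q(X, -)`: the biproduct, over all objects `X` of
`Q`, of the representable `Sl`-functors, computed pointwise (recall that in `Sl`
small coproducts are biproducts, i.e. products). -/
def RepBiprod : SlFunctor Q where
  obj Y := ⟨∀ X : Q, (X ⟶ Y)⟩
  map {Y Z} f h := fun X => h X ≫ f
  map_sSup {Y Z} f s := by
    funext X
    have h1 : (sSup s : ∀ X : Q, (X ⟶ Y)) X = ⨆ h ∈ s, h X :=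
      sSup_apply.trans (iSup_subtype'' s fun h => h X)
    show sSup s X ≫ f = _
    rw [h1]
    simp only [Quantaloid.iSup_comp, iSup_apply]
  map_id Y := by
    funext h X
    exact Category.comp_id (h X)
  map_comp {Y Z W} f g := by
    funext h X
    exact (Category.assoc (h X) f g).symm
  sSup_map {Y Z} s m := by
    funext X
    show m X ≫ sSup s = _
    rw [Quantaloid.comp_sSup]
    simp only [iSup_apply]

variable {Q}

namespace QMod

variable {A : Type u} [UQuantale A]

theorem hom_biSup {M N : QMod.{u, v} A} (f : M ⟶ N) {ι : Type*} (s : Set ι)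
    (g : ι → M.carrier) : f.1 (⨆ i ∈ s, g i) = ⨆ i ∈ s, f.1 (g i) := by
  simp only [hom_iSup]

def isoOfInverse {M N : QMod.{u, v} A} (f : M ⟶ N) (g : N.carrier → M.carrier)
    (hgf : Function.LeftInverse g f.1) (hfg : Function.RightInverse g f.1) : M ≅ N where
  hom := f
  inv := ⟨g, fun s => hgf.injective (by
      rw [hfg, hom_biSup, sSup_eq_iSup]
      exact iSup_congr fun n => iSup_congr fun _ => (hfg n).symm),
    fun n a => hgf.injective (by rw [hfg, f.2.2, hfg])⟩
  hom_inv_id := Subtype.ext (funext hgf)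
  inv_hom_id := Subtype.ext (funext hfg)

variable (M : QMod.{u, v} A)

def fixedPoints (a : A) : Type v := {m : M.carrier // M.act m a = m}

variable {M}

instance (a : A) : PartialOrder (M.fixedPoints a) :=
  inferInstanceAs (PartialOrder {m : M.carrier // M.act m a = m})

instance (a : A) : SupSet (M.fixedPoints a) :=
  ⟨fun s => ⟨⨆ m ∈ s, m.1, by
    simp only [iSup_act]; exact iSup_congr fun m => iSup_congr fun _ => m.2⟩⟩

theorem fixedPoints.coe_sSup {a : A} (s : Set (M.fixedPoints a)) :
    (sSup s).1 = ⨆ m ∈ s, m.1 := rfl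

instance (a : A) : CompleteLattice (M.fixedPoints a) :=
  completeLatticeOfSup _ fun _ =>
    ⟨fun m hm => le_iSup₂ (f := fun (m : M.fixedPoints a) _ => m.1) m hm,
      fun _ hb => iSup₂_le fun _ hm => hb hm⟩

theorem fixedPoints.coe_iSup {a : A} {ι : Sort w} (g : ι → M.fixedPoints a) :
    (⨆ i, g i).1 = ⨆ i, (g i).1 := by
  rw [iSup, fixedPoints.coe_sSup, iSup_range]

theorem fixedPoints.coe_biSup {a : A} {ι : Type*} (s : Set ι) (g : ι → M.fixedPoints a) :
    (⨆ i ∈ s, g i).1 = ⨆ i ∈ s, (g i).1 := by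
  simp only [fixedPoints.coe_iSup]

end QMod

namespace SlFunctor

theorem iSup_map (F : SlFunctor Q) {X Y : Q} {ι : Sort w} (f : ι → (X ⟶ Y))
    (m : (F.obj X).carrier) : F.map (⨆ i, f i) m = ⨆ i, F.map (f i) m := by
  rw [iSup, F.sSup_map]; exact iSup_range

theorem hom_ext {F G : SlFunctor Q} {α β : F ⟶ G} (h : ∀ X m, α.1 X m = β.1 X m) :
    α = β :=
  Subtype.ext (funext fun X => funext (h X))

theorem biSup_app {F G : SlFunctor Q} {ι : Type*} (s : Set ι) (h : ι → (F ⟶ G)) (X : Q)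
    (m : (F.obj X).carrier) : (⨆ i ∈ s, h i).1 X m = ⨆ i ∈ s, (h i).1 X m := by
  simp only [slHom_iSup_apply]

end SlFunctor

namespace RepBiprod

theorem obj_sSup_apply {W : Q} (s : Set ((RepBiprod Q).obj W).carrier) (X : Q) :
    sSup s X = ⨆ h ∈ s, h X :=
  sSup_apply.trans (iSup_subtype'' s fun h => h X)

theorem map_apply {W V : Q} (g : W ⟶ V) (h : ((RepBiprod Q).obj W).carrier) (X : Q) :
    (RepBiprod Q).map g h X = h X ≫ g := rfl

/-- The Kronecker delta: `𝟙 Y` in the `Y`-component, `⊥` in all others. -/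
def idElem (Y : Q) : ((RepBiprod Q).obj Y).carrier := fun X => ⨆ p : X = Y, eqToHom p

theorem idElem_self (Y : Q) : idElem Y Y = 𝟙 Y :=
  iSup_pos (rfl : Y = Y)

theorem iSup_map_idElem {W : Q} (h : ((RepBiprod Q).obj W).carrier) :
    ⨆ X, (RepBiprod Q).map (h X) (idElem X) = h := by
  funext X'
  refine iSup_apply.trans ?_
  show ⨆ X, idElem X X' ≫ h X = h X'
  simp only [idElem, Quantaloid.iSup_comp, iSup_iSup_eq_right, eqToHom_refl, Category.id_comp]

/-- The Yoneda transformation `Q(X, -) ⟶ F` of `x`, precomposed with the projection of the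
biproduct onto its `X`-summand. -/
def homOfElem (F : SlFunctor Q) {X : Q} (x : (F.obj X).carrier) : RepBiprod Q ⟶ F :=
  ⟨fun _ h => F.map (h X) x,
    fun _ s => by simp only [obj_sSup_apply, SlFunctor.iSup_map],
    fun g h => congrFun (F.map_comp (h X) g) x⟩

variable {F G : SlFunctor Q}

theorem homOfElem_app {X : Q} (x : (F.obj X).carrier) {W : Q}
    (h : ((RepBiprod Q).obj W).carrier) : (homOfElem F x).1 W h = F.map (h X) x := rfl

theorem homOfElem_app_idElem {X : Q} (x : (F.obj X).carrier) :
    (homOfElem F x).1 X (idElem X) = x := by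
  rw [homOfElem_app, idElem_self, F.map_id]; rfl

theorem homOfElem_comp {X : Q} (x : (F.obj X).carrier) (α : F ⟶ G) :
    homOfElem F x ≫ α = homOfElem G (α.1 X x) :=
  SlFunctor.hom_ext fun _ h => α.2.2 (h X) x

theorem homOfElem_iSup {X : Q} {ι : Sort w} (g : ι → (F.obj X).carrier) :
    homOfElem F (⨆ i, g i) = ⨆ i, homOfElem F (g i) :=
  SlFunctor.hom_ext fun _ h => by rw [slHom_iSup_apply, homOfElem_app, F.map_iSup]; rfl

theorem iSup_homOfElem_idElem : ⨆ X, homOfElem (RepBiprod Q) (idElem X) = 𝟙 (RepBiprod Q) :=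
  SlFunctor.hom_ext fun _ h => by rw [slHom_iSup_apply]; exact iSup_map_idElem h

theorem app_eq_homOfElem_comp_app (γ : RepBiprod Q ⟶ F) {W : Q}
    (h : ((RepBiprod Q).obj W).carrier) :
    γ.1 W h = (homOfElem (RepBiprod Q) h ≫ γ).1 W (idElem W) := by
  rw [homOfElem_comp, homOfElem_app_idElem]

/-- The endomorphism of `⊕_X Q(X, -)` sending the `Z`-summand to the `Y`-summand by
precomposition with `f`. -/
def matrixUnit {Y Z : Q} (f : Y ⟶ Z) : RepBiprod Q ⟶ RepBiprod Q :=
  homOfElem (RepBiprod Q) ((RepBiprod Q).map f (idElem Y))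

theorem homOfElem_map {Y Z : Q} (f : Y ⟶ Z) (x : (F.obj Y).carrier) :
    homOfElem F (F.map f x) = matrixUnit f ≫ homOfElem F x := by
  rw [matrixUnit, homOfElem_comp, (homOfElem F x).2.2, homOfElem_app_idElem]

theorem matrixUnit_comp {X Y Z : Q} (f : X ⟶ Y) (g : Y ⟶ Z) :
    matrixUnit (f ≫ g) = matrixUnit f * matrixUnit g := by
  rw [Quantaloid.end_mul_def, matrixUnit, (RepBiprod Q).map_comp, Function.comp_apply,
    homOfElem_map]; rfl

theorem matrixUnit_sSup {Y Z : Q} (s : Set (Y ⟶ Z)) :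
    matrixUnit (sSup s) = ⨆ f ∈ s, matrixUnit f := by
  simp only [matrixUnit, (RepBiprod Q).sSup_map, homOfElem_iSup]

theorem matrixUnit_id_mul_homOfElem {X W : Q} (h : ((RepBiprod Q).obj W).carrier) :
    matrixUnit (𝟙 X) * homOfElem (RepBiprod Q) h = matrixUnit (h X) := by
  rw [Quantaloid.end_mul_def, homOfElem_comp, matrixUnit, homOfElem_app, (RepBiprod Q).map_id]
  rfl

def homModule (F : SlFunctor Q) : QMod.{u, u} (RepBiprod Q ⟶ RepBiprod Q) where
  carrier := RepBiprod Q ⟶ F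
  act γ a := a ≫ γ
  act_one := Category.id_comp
  act_mul γ a b := by rw [Quantaloid.end_mul_def, Category.assoc]
  sSup_act s a := Quantaloid.comp_sSup a s
  act_sSup γ s := Quantaloid.sSup_comp s γ

def homFunctor : SlFunctor Q ⥤ QMod.{u, u} (RepBiprod Q ⟶ RepBiprod Q) where
  obj := homModule
  map β :=
    ⟨fun γ => γ ≫ β, fun s => Quantaloid.sSup_comp s β, fun γ a => Category.assoc a γ β⟩
  map_id _ := Subtype.ext (funext Category.comp_id)
  map_comp α β := Subtype.ext (funext fun γ => (Category.assoc γ α β).symm)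

instance : (homFunctor (Q := Q)).Faithful where
  map_injective {F G β β'} hββ' := SlFunctor.hom_ext fun X x => by
    have h := congrFun (congrArg Subtype.val hββ') (homOfElem F x)
    change homOfElem F x ≫ β = homOfElem F x ≫ β' at h
    rw [homOfElem_comp, homOfElem_comp] at h
    simpa only [homOfElem_app_idElem] using congrArg (fun γ => γ.1 X (idElem X)) h

theorem moduleHom_app (φ : homFunctor.obj F ⟶ homFunctor.obj G) (γ : RepBiprod Q ⟶ F) {W : Q}
    (h : ((RepBiprod Q).obj W).carrier) :
    (φ.1 γ).1 W h = (φ.1 (homOfElem F (γ.1 W h))).1 W (idElem W) := by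
  rw [app_eq_homOfElem_comp_app (φ.1 γ), ← homOfElem_comp]
  exact congrArg (fun δ : RepBiprod Q ⟶ G => δ.1 W (idElem W)) (φ.2.2 γ _).symm

def natTransOfModuleHom (φ : homFunctor.obj F ⟶ homFunctor.obj G) : F ⟶ G :=
  ⟨fun X x => (φ.1 (homOfElem F x)).1 X (idElem X),
    fun X s => by
      rw [sSup_eq_iSup]
      simp only [homOfElem_iSup]
      exact (congrArg (fun δ : RepBiprod Q ⟶ G => δ.1 X (idElem X))
        (QMod.hom_biSup φ s (homOfElem F))).trans (SlFunctor.biSup_app s _ X _),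
    fun {X Y} f x => by
      have h := moduleHom_app φ (homOfElem F x) ((RepBiprod Q).map f (idElem X))
      rw [(φ.1 (homOfElem F x)).2.2, homOfElem_app, map_apply, idElem_self, Category.id_comp] at h
      exact h.symm⟩

theorem homFunctor_map_natTransOfModuleHom (φ : homFunctor.obj F ⟶ homFunctor.obj G) :
    homFunctor.map (natTransOfModuleHom φ) = φ :=
  Subtype.ext (funext fun γ => SlFunctor.hom_ext fun _ h => (moduleHom_app φ γ h).symm)

instance : (homFunctor (Q := Q)).Full where
  map_surjective φ := ⟨natTransOfModuleHom φ, homFunctor_map_natTransOfModuleHom φ⟩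

variable (M : QMod.{u, u} (RepBiprod Q ⟶ RepBiprod Q))

def fixedMap {Y Z : Q} (f : Y ⟶ Z) (m : M.fixedPoints (matrixUnit (𝟙 Y))) :
    M.fixedPoints (matrixUnit (𝟙 Z)) :=
  ⟨M.act m.1 (matrixUnit f), by rw [← M.act_mul, ← matrixUnit_comp, Category.comp_id]⟩

/-- `Ψ M`, with `M · e` realised as the fixed points of the idempotent `e`. -/
def fixedFunctor : SlFunctor Q where
  obj Y := ⟨M.fixedPoints (matrixUnit (𝟙 Y))⟩
  map := fixedMap M
  map_sSup f s := Subtype.ext <| calc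
    M.act (⨆ m ∈ s, m.1) (matrixUnit f) = ⨆ m ∈ s, M.act m.1 (matrixUnit f) := by
      simp only [QMod.iSup_act]
    _ = _ := (QMod.fixedPoints.coe_biSup s (fixedMap M f)).symm
  map_id _ := funext fun m => Subtype.ext m.2
  map_comp f g := funext fun m => Subtype.ext <| by
    change M.act m.1 (matrixUnit (f ≫ g)) = M.act (M.act m.1 (matrixUnit f)) (matrixUnit g)
    rw [matrixUnit_comp, M.act_mul]
  sSup_map s m := Subtype.ext <| calc
    M.act m.1 (matrixUnit (sSup s)) = ⨆ f ∈ s, M.act m.1 (matrixUnit f) := by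
      simp only [matrixUnit_sSup, QMod.act_iSup]
    _ = _ := (QMod.fixedPoints.coe_biSup s fun f => fixedMap M f m).symm

variable {M}

theorem act_homOfElem_of_fixed {X W : Q} (v : M.fixedPoints (matrixUnit (𝟙 X)))
    (h : ((RepBiprod Q).obj W).carrier) :
    M.act v.1 (homOfElem (RepBiprod Q) h) = M.act v.1 (matrixUnit (h X)) := by
  nth_rw 1 [← v.2]
  rw [← M.act_mul, matrixUnit_id_mul_homOfElem]

variable (M)

def actHomOfElem (m : M.carrier) {W : Q} (h : ((RepBiprod Q).obj W).carrier) :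
    M.fixedPoints (matrixUnit (𝟙 W)) :=
  ⟨M.act m (homOfElem (RepBiprod Q) h), by
    rw [← M.act_mul, Quantaloid.end_mul_def, ← homOfElem_map, (RepBiprod Q).map_id]; rfl⟩

def toHomFixed (m : M.carrier) : RepBiprod Q ⟶ fixedFunctor M :=
  ⟨fun _ => actHomOfElem M m,
    fun _ s => Subtype.ext <| calc
      M.act m (homOfElem _ (sSup s)) = ⨆ h ∈ s, M.act m (homOfElem _ h) := by
        rw [sSup_eq_iSup]; simp only [homOfElem_iSup, QMod.act_iSup]
      _ = _ := (QMod.fixedPoints.coe_biSup s (actHomOfElem M m)).symm,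
    fun g h => Subtype.ext <| by
      change M.act m (homOfElem _ ((RepBiprod Q).map g h)) =
        M.act (M.act m (homOfElem _ h)) (matrixUnit g)
      rw [homOfElem_map, ← Quantaloid.end_mul_def, M.act_mul]⟩

theorem toHomFixed_isHom : QMod.IsHom M (homFunctor.obj (fixedFunctor M)) (toHomFixed M) :=
  ⟨fun s => SlFunctor.hom_ext fun W h => Subtype.ext <| calc
      M.act (sSup s) (homOfElem _ h) = ⨆ m ∈ s, ((toHomFixed M m).1 W h).1 := M.sSup_act s _
      _ = (⨆ m ∈ s, (toHomFixed M m).1 W h).1 := (QMod.fixedPoints.coe_biSup s _).symm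
      _ = ((⨆ m ∈ s, toHomFixed M m).1 W h).1 :=
        congrArg Subtype.val (SlFunctor.biSup_app s _ W h).symm,
    fun m a => SlFunctor.hom_ext fun _ h => Subtype.ext <| by
      change M.act (M.act m a) (homOfElem _ h) = M.act m (homOfElem _ (a.1 _ h))
      rw [← homOfElem_comp, ← Quantaloid.end_mul_def, M.act_mul]⟩

def ofHomFixed (γ : RepBiprod Q ⟶ fixedFunctor M) : M.carrier :=
  ⨆ X, (γ.1 X (idElem X)).1

theorem ofHomFixed_toHomFixed (m : M.carrier) : ofHomFixed M (toHomFixed M m) = m := by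
  change ⨆ X, M.act m (homOfElem _ (idElem X)) = m
  rw [← QMod.act_iSup, iSup_homOfElem_idElem]
  exact M.act_one m

theorem toHomFixed_ofHomFixed (γ : RepBiprod Q ⟶ fixedFunctor M) :
    toHomFixed M (ofHomFixed M γ) = γ :=
  SlFunctor.hom_ext fun W h => Subtype.ext <| calc
    M.act (ofHomFixed M γ) (homOfElem _ h)
      = ⨆ X, M.act (γ.1 X (idElem X)).1 (matrixUnit (h X)) := by
        rw [ofHomFixed, QMod.iSup_act]
        exact iSup_congr fun X => act_homOfElem_of_fixed (γ.1 X (idElem X)) h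
    _ = ⨆ X, (γ.1 W ((RepBiprod Q).map (h X) (idElem X))).1 :=
        iSup_congr fun X => congrArg Subtype.val (γ.2.2 (h X) (idElem X)).symm
    _ = (⨆ X, γ.1 W ((RepBiprod Q).map (h X) (idElem X))).1 :=
        (QMod.fixedPoints.coe_iSup _).symm
    _ = (γ.1 W h).1 := by rw [← slNat_iSup, iSup_map_idElem]

instance : (homFunctor (Q := Q)).EssSurj where
  mem_essImage M := ⟨fixedFunctor M, ⟨(QMod.isoOfInverse (N := homFunctor.obj (fixedFunctor M))
    ⟨toHomFixed M, toHomFixed_isHom M⟩ (ofHomFixed M) (ofHomFixed_toHomFixed M)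
    (toHomFixed_ofHomFixed M)).symm⟩⟩

instance : (homFunctor (Q := Q)).IsEquivalence where

end RepBiprod

variable (Q)

/-- for a small quantaloid `Q`, the category of `Sl`-functors and
`Sl`-natural transformations from `Q` to `Sl` is equivalent to a category of modules
over a quantale; explicitly, one may take the quantale to be the endomorphism
quantale of the biproduct `⊕_{X ∈ Q} Q(X,-)` of the representable `Sl`-functors. -/
theorem slFunctor_category_equiv_modules :
    (∃ (E : Type u) (_ : UQuantale E), Nonempty (SlFunctor Q ≌ QMod.{u, u} E)) ∧
    Nonempty (SlFunctor Q ≌ QMod.{u, u} (RepBiprod Q ⟶ RepBiprod Q)) :=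
  ⟨⟨_, inferInstance, ⟨RepBiprod.homFunctor.asEquivalence⟩⟩,
    ⟨RepBiprod.homFunctor.asEquivalence⟩⟩

end Statement5
end

section
/- Two commutative quantales are Morita equivalent if and only if they are isomorphic as quantales. -/
open CategoryTheory Set

universe u v w

/-!
For commutative `A`, right multiplication by `a` is a module endomorphism, natural in the module,
and every natural endomorphism `z` of the identity functor of `Mod_A` arises this way from
`a = z_A(1)`, since each `m ∈ M` is the image of `1` under `x ↦ m·x`. So `A` is the centre of
`Mod_A`, and an equivalence `Mod_A ≌ Mod_B` induces a monoid isomorphism `A ≃* B`. It preserves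
joins because a join `⨆ i, u i` of morphisms is the diagonal into the power `M^ι` followed by the
copairing of the `u i`, a description that fully faithful functors respect. Conversely,
restriction of scalars along a quantale isomorphism is an equivalence.
-/

namespace CategoryTheory.Equivalence

variable {C : Type*} {D : Type*} [Category C] [Category D]

noncomputable def catCenterMulEquiv (e : C ≌ D) : CatCenter C ≃* CatCenter D :=
  ((e.congrLeft.trans e.congrRight).fullyFaithfulFunctor.mulEquivEnd (𝟭 C)).trans
    (Iso.conj e.counitIso)

theorem catCenterMulEquiv_app (e : C ≌ D) (z : CatCenter C) (Y : D) :
    (e.catCenterMulEquiv z).app Y =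
      e.counitIso.inv.app Y ≫ e.functor.map (z.app (e.inverse.obj Y)) ≫ e.counitIso.hom.app Y :=
  rfl

end CategoryTheory.Equivalence

theorem Equiv.symm_map_sSup {α β : Type*} [CompleteLattice α] [CompleteLattice β] (f : α ≃ β)
    (hf : ∀ s : Set α, f (sSup s) = ⨆ a ∈ s, f a) (t : Set β) :
    f.symm (sSup t) = ⨆ b ∈ t, f.symm b := by
  apply f.injective
  rw [f.apply_symm_apply, ← sSup_image, hf, iSup_image]
  simp only [f.apply_symm_apply, sSup_eq_iSup]

namespace QMod

section HomLattice

variable {A : Type u} [UQuantale A] {M N P : QMod.{u, v} A}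

@[ext]
theorem hom_ext {f g : M ⟶ N} (h : ∀ m, f.1 m = g.1 m) : f = g :=
  Subtype.ext (funext h)

@[simp]
theorem comp_apply (f : M ⟶ N) (g : N ⟶ P) (m : M.carrier) : (f ≫ g).1 m = g.1 (f.1 m) :=
  rfl

theorem hom_bot (f : M ⟶ N) : f.1 ⊥ = ⊥ := by
  simpa using f.2.1 ∅

theorem bot_hom_apply (m : M.carrier) : (⊥ : M ⟶ N).1 m = ⊥ := by
  rw [← sSup_empty, sSup_hom_apply]
  simp

theorem bot_act (a : A) : M.act ⊥ a = ⊥ := by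
  simpa using M.sSup_act ∅ a

theorem comp_iSup {ι : Sort w} (f : M ⟶ N) (g : ι → (N ⟶ P)) :
    f ≫ (⨆ i, g i) = ⨆ i, f ≫ g i := by
  ext m
  simp only [comp_apply, iSup_hom_apply]

theorem iSup_comp {ι : Sort w} (f : ι → (M ⟶ N)) (g : N ⟶ P) :
    (⨆ i, f i) ≫ g = ⨆ i, f i ≫ g := by
  ext m
  simp only [comp_apply, iSup_hom_apply, hom_iSup]

theorem comp_bot (f : M ⟶ N) : f ≫ (⊥ : N ⟶ P) = ⊥ := by
  ext m
  simp only [comp_apply, bot_hom_apply]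

theorem bot_comp (g : N ⟶ P) : (⊥ : M ⟶ N) ≫ g = ⊥ := by
  ext m
  simp only [comp_apply, bot_hom_apply, hom_bot]

end HomLattice

section Power

variable {A : Type u} [UQuantale A] {ι : Type v}

abbrev pi (ι : Type v) (M : QMod.{u, v} A) : QMod.{u, v} A where
  carrier := ι → M.carrier
  act x a i := M.act (x i) a
  act_one x := funext fun i => M.act_one (x i)
  act_mul x a b := funext fun i => M.act_mul (x i) a b
  sSup_act s a := funext fun i => by
    simp only [sSup_apply, iSup_apply, iSup_act, iSup_subtype']
  act_sSup x s := funext fun i => by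
    simp only [iSup_apply, M.act_sSup]

variable {M N : QMod.{u, v} A}

def proj (M : QMod.{u, v} A) (i : ι) : pi ι M ⟶ M :=
  ⟨fun x => x i, fun s => by simp only [sSup_apply, iSup_subtype'], fun _ _ => rfl⟩

def inj [DecidableEq ι] (M : QMod.{u, v} A) (i : ι) : M ⟶ pi ι M :=
  ⟨fun m j => if j = i then m else ⊥,
    fun s => funext fun j => by
      by_cases h : j = i <;> simp [h, iSup_apply, sSup_eq_iSup],
    fun m a => funext fun j => by
      by_cases h : j = i <;> simp [h, bot_act]⟩

def diag (M : QMod.{u, v} A) : M ⟶ pi ι M :=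
  ⟨fun m _ => m, fun s => funext fun i => by simp only [iSup_apply, sSup_eq_iSup],
    fun _ _ => rfl⟩

def copair (u : ι → (M ⟶ N)) : pi ι M ⟶ N :=
  ⟨fun x => ⨆ i, (u i).1 (x i),
    fun s => by
      simp only [sSup_apply, hom_iSup]
      rw [iSup_comm, iSup_subtype'],
    fun x a => by
      simp only [iSup_act, ← (u _).2.2]⟩

theorem hom_ext_proj {f g : N ⟶ pi ι M} (h : ∀ i, f ≫ proj M i = g ≫ proj M i) : f = g := by
  ext n i
  exact congrArg (fun k : N ⟶ M => k.1 n) (h i)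

theorem eq_iSup_inj [DecidableEq ι] (x : (pi ι M).carrier) : x = ⨆ i, (inj M i).1 (x i) := by
  funext j
  rw [iSup_apply]
  apply le_antisymm
  · exact le_iSup_of_le j (by simp [inj])
  · exact iSup_le fun i => by by_cases h : j = i <;> simp [inj, h]

theorem hom_ext_inj [DecidableEq ι] {f g : pi ι M ⟶ N} (h : ∀ i, inj M i ≫ f = inj M i ≫ g) :
    f = g := by
  ext x
  rw [eq_iSup_inj x, hom_iSup, hom_iSup]
  exact iSup_congr fun i => congrArg (fun k : M ⟶ N => k.1 (x i)) (h i)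

theorem inj_proj_self [DecidableEq ι] (i : ι) : inj M i ≫ proj M i = 𝟙 M := by
  ext m
  exact if_pos rfl

theorem inj_proj_of_ne [DecidableEq ι] {i j : ι} (h : i ≠ j) : inj M i ≫ proj M j = ⊥ := by
  ext m
  simp [inj, proj, bot_hom_apply, Ne.symm h]

theorem inj_copair [DecidableEq ι] (u : ι → (M ⟶ N)) (i : ι) : inj M i ≫ copair u = u i := by
  ext m
  apply le_antisymm
  · exact iSup_le fun j => by by_cases h : j = i <;> simp [inj, h, hom_bot]
  · exact le_iSup_of_le i (by simp [inj])

theorem diag_proj (i : ι) : diag M ≫ proj M i = 𝟙 M :=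
  rfl

theorem diag_copair (u : ι → (M ⟶ N)) : diag M ≫ copair u = ⨆ i, u i := by
  ext m
  rw [iSup_hom_apply]
  rfl

end Power

section FullyFaithful

variable {A : Type u} {B : Type w} [UQuantale A] [UQuantale B]
variable (F : QMod.{u, v} A ⥤ QMod.{w, v} B)

theorem map_bot [F.Full] {M N : QMod.{u, v} A} : F.map (⊥ : M ⟶ N) = ⊥ := by
  calc F.map (⊥ : M ⟶ N) = F.map (⊥ ≫ F.preimage (⊥ : F.obj N ⟶ F.obj N)) := by
        rw [bot_comp]
    _ = ⊥ := by rw [F.map_comp, F.map_preimage, comp_bot]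

theorem map_iSup [F.Full] [F.Faithful] {M N : QMod.{u, v} A} {ι : Type v} (u : ι → (M ⟶ N)) :
    F.map (⨆ i, u i) = ⨆ i, F.map (u i) := by
  classical
  let c : pi ι (F.obj M) ⟶ F.obj (pi ι M) := copair fun i => F.map (inj M i)
  have c_proj (i : ι) : c ≫ F.map (proj M i) = proj (F.obj M) i := by
    refine hom_ext_inj fun j => ?_
    rw [← Category.assoc, inj_copair, ← F.map_comp]
    by_cases h : j = i
    · subst h
      rw [inj_proj_self, inj_proj_self, F.map_id]
    · rw [inj_proj_of_ne h, inj_proj_of_ne h, map_bot]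
  have map_diag : F.map (diag M) = diag (F.obj M) ≫ c := by
    rw [← F.map_preimage (diag (F.obj M) ≫ c)]
    congr 1
    refine hom_ext_proj fun i => F.map_injective ?_
    rw [diag_proj, F.map_comp, F.map_preimage, Category.assoc, c_proj, diag_proj, F.map_id]
  have c_copair : c ≫ F.map (copair u) = copair fun i => F.map (u i) := by
    refine hom_ext_inj fun i => ?_
    rw [← Category.assoc, inj_copair, ← F.map_comp, inj_copair, inj_copair]
  rw [← diag_copair, F.map_comp, map_diag, Category.assoc, c_copair, diag_copair]

end FullyFaithful

section Center

variable {A : Type u} [UQuantale A]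

abbrev regMod (A : Type u) [UQuantale A] : QMod.{u, u} A where
  carrier := A
  act := (· * ·)
  act_one := mul_one
  act_mul m a b := (mul_assoc m a b).symm
  sSup_act := UQuantale.sSup_mul
  act_sSup := UQuantale.mul_sSup

def homOfElem (M : QMod.{u, u} A) (m : M.carrier) : regMod A ⟶ M :=
  ⟨M.act m, M.act_sSup m, M.act_mul m⟩

variable (hA : ∀ a b : A, a * b = b * a)
include hA

def actHom (M : QMod.{u, v} A) (a : A) : M ⟶ M :=
  ⟨fun m => M.act m a, fun s => M.sSup_act s a, fun m b => by
    simp only [← M.act_mul, hA]⟩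

theorem actHom_sSup (M : QMod.{u, v} A) (s : Set A) :
    actHom hA M (sSup s) = ⨆ a : s, actHom hA M a := by
  ext m
  rw [iSup_hom_apply]
  exact (M.act_sSup m s).trans iSup_subtype'

def actCenter (a : A) : CatCenter (QMod.{u, v} A) where
  app M := actHom hA M a
  naturality _ _ f := hom_ext fun m => (f.2.2 m a).symm

@[simp]
theorem actCenter_app (a : A) (M : QMod.{u, v} A) : (actCenter hA a).app M = actHom hA M a :=
  rfl

theorem eq_actCenter (z : CatCenter (QMod.{u, u} A)) :
    z = actCenter hA ((z.app (regMod A)).1 (1 : A)) := by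
  ext M : 1
  ext m
  have h : (z.app M).1 (M.act m 1) = M.act m ((z.app (regMod A)).1 (1 : A)) :=
    congrArg (fun f : regMod A ⟶ M => f.1 (1 : A)) (z.naturality (homOfElem M m))
  rwa [M.act_one] at h

def mulEquivCatCenter : A ≃* CatCenter (QMod.{u, u} A) where
  toFun := actCenter hA
  invFun z := (z.app (regMod A)).1 (1 : A)
  left_inv a := one_mul a
  right_inv z := (eq_actCenter hA z).symm
  map_mul' a b := by
    ext M : 1
    ext m
    rw [CatCenter.mul_app]
    exact M.act_mul m a b

end Center

section OfEquivalence

variable {A B : Type u} [UQuantale A] [UQuantale B]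
variable (hA : ∀ a b : A, a * b = b * a) (hB : ∀ a b : B, a * b = b * a)

theorem catCenterMulEquiv_actCenter_sSup_app (e : QMod.{u, u} A ≌ QMod.{u, u} B) (s : Set A)
    (N : QMod.{u, u} B) :
    (e.catCenterMulEquiv (actCenter hA (sSup s))).app N =
      ⨆ a : s, (e.catCenterMulEquiv (actCenter hA a)).app N := by
  simp only [Equivalence.catCenterMulEquiv_app, actCenter_app]
  rw [actHom_sSup, map_iSup, iSup_comp, comp_iSup]

noncomputable def mulEquivOfEquivalence (e : QMod.{u, u} A ≌ QMod.{u, u} B) : A ≃* B :=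
  (mulEquivCatCenter hA).trans (e.catCenterMulEquiv.trans (mulEquivCatCenter hB).symm)

theorem isQuantaleIso_mulEquivOfEquivalence (e : QMod.{u, u} A ≌ QMod.{u, u} B) :
    IsQuantaleIso (mulEquivOfEquivalence hA hB e) := by
  refine ⟨MulEquiv.bijective _, fun s => ?_, map_one _, map_mul _⟩
  change ((e.catCenterMulEquiv (actCenter hA (sSup s))).app (regMod B)).1 (1 : B) = _
  rw [catCenterMulEquiv_actCenter_sSup_app, iSup_hom_apply, iSup_subtype']
  rfl

end OfEquivalence

section RestrictScalars

variable {A : Type u} {B : Type w} [UQuantale A] [UQuantale B]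

def restrictScalars (f : B →* A) (hf : ∀ t : Set B, f (sSup t) = ⨆ b ∈ t, f b) :
    QMod.{u, v} A ⥤ QMod.{w, v} B where
  obj M :=
    { carrier := M.carrier
      act := fun m b => M.act m (f b)
      act_one := fun m => by rw [map_one, M.act_one]
      act_mul := fun m a b => by rw [map_mul, M.act_mul]
      sSup_act := fun s b => M.sSup_act s (f b)
      act_sSup := fun m t => by simp only [hf, act_iSup] }
  map g := ⟨g.1, g.2.1, fun m b => g.2.2 m (f b)⟩

def restrictScalarsCompIso (f : B →* A) (hf : ∀ t : Set B, f (sSup t) = ⨆ b ∈ t, f b)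
    (g : A →* B) (hg : ∀ s : Set A, g (sSup s) = ⨆ a ∈ s, g a) (hfg : ∀ a, f (g a) = a) :
    (restrictScalars f hf ⋙ restrictScalars g hg : QMod.{u, v} A ⥤ QMod.{u, v} A) ≅ 𝟭 _ :=
  NatIso.ofComponents
    (fun M =>
      { hom := ⟨id, (isHom_id M).1, fun m a => congrArg (M.act m) (hfg a)⟩
        inv := ⟨id, (isHom_id M).1, fun m a => congrArg (M.act m) (hfg a).symm⟩ })
    (fun _ => rfl)

def equivalenceOfMulEquiv (f : A ≃* B) (hf : ∀ s : Set A, f (sSup s) = ⨆ a ∈ s, f a) :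
    QMod.{u, v} A ≌ QMod.{w, v} B :=
  have hf' := Equiv.symm_map_sSup f.toEquiv hf
  CategoryTheory.Equivalence.mk
    (restrictScalars f.symm.toMonoidHom hf') (restrictScalars f.toMonoidHom hf)
    (restrictScalarsCompIso _ _ _ _ f.symm_apply_apply).symm
    (restrictScalarsCompIso _ _ _ _ f.apply_symm_apply)

end RestrictScalars

end QMod

theorem commutative_morita_iff_iso (A B : Type u) [UQuantale A] [UQuantale B]
    (hA : ∀ a b : A, a * b = b * a) (hB : ∀ a b : B, a * b = b * a) :
    MoritaEquivalent A B ↔ ∃ f : A → B, IsQuantaleIso f := by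
  constructor
  · rintro ⟨e⟩
    exact ⟨_, QMod.isQuantaleIso_mulEquivOfEquivalence hA hB e⟩
  · rintro ⟨f, hf_bij, hf_sSup, -, hf_mul⟩
    exact ⟨QMod.equivalenceOfMulEquiv (MulEquiv.ofBijective (MulHom.mk f hf_mul) hf_bij) hf_sSup⟩
end

section
/- Let A be a quantale and e an idempotent element of A (e*e = e). The right A-module eA is a generator for the category Mod_A(Sl) of right A-modules if and only if e is a full idempotent, i.e. AeA = A, where AeA = { ⋁_{i∈I} a_i*e*a'_i : {a_i}_{i∈I}, {a'_i}_{i∈I} ⊆ A }. -/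
open CategoryTheory Set

universe u v w

/-! ### Sub-sup-lattices given by sup-closed predicates -/

section SubLattice

variable {L : Type u} [CompleteLattice L]

/-- A predicate closed under arbitrary suprema. -/
class SSupClosed (p : L → Prop) : Prop where
  closed : ∀ s : Set L, (∀ x ∈ s, p x) → p (sSup s)

instance subtypeSupSet (p : L → Prop) [SSupClosed p] : SupSet { x : L // p x } :=
  ⟨fun s => ⟨sSup (Subtype.val '' s), SSupClosed.closed _ (by rintro x ⟨y, _, rfl⟩; exact y.2)⟩⟩

/-- The sub-sup-lattice on a sup-closed subset: suprema are computed as in `L`. -/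
instance subtypeCompleteLattice (p : L → Prop) [SSupClosed p] :
    CompleteLattice { x : L // p x } :=
  completeLatticeOfSup _ (fun s => by
    constructor
    · intro x hx
      show x.1 ≤ sSup (Subtype.val '' s)
      exact le_sSup (Set.mem_image_of_mem _ hx)
    · intro b hb
      show sSup (Subtype.val '' s) ≤ b.1
      refine sSup_le ?_
      rintro y ⟨z, hz, rfl⟩
      exact hb hz)

theorem subtype_sSup_val (p : L → Prop) [SSupClosed p] (s : Set { x : L // p x }) :
    (sSup s).1 = sSup (Subtype.val '' s) := rfl

theorem subtype_iSup_val {p : L → Prop} [SSupClosed p] {ι : Sort w} (f : ι → { x : L // p x }) :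
    (⨆ i, f i).1 = ⨆ i, (f i).1 := by
  show sSup (Subtype.val '' Set.range f) = _
  rw [← Set.range_comp]
  rfl

end SubLattice

/-! ### Submodules and subquantales determined by idempotents -/

section Idem

variable {A : Type u} [UQuantale A]

instance leftFixedClosed (e : A) : SSupClosed (fun a : A => e * a = a) :=
  ⟨fun s hs => by
    rw [UQuantale.mul_sSup, sSup_eq_iSup]
    exact iSup_congr fun a => iSup_congr fun ha => hs a ha⟩

instance rightFixedClosed (e : A) : SSupClosed (fun a : A => a * e = a) :=
  ⟨fun s hs => by
    rw [UQuantale.sSup_mul, sSup_eq_iSup]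
    exact iSup_congr fun a => iSup_congr fun ha => hs a ha⟩

instance cornerClosed (e : A) : SSupClosed (fun x : A => e * x * e = x) :=
  ⟨fun s hs => by
    rw [UQuantale.mul_sSup, UQuantale.iSup_mul, sSup_eq_iSup]
    exact iSup_congr fun a => by
      rw [UQuantale.iSup_mul]
      exact iSup_congr fun ha => hs a ha⟩

instance actFixedClosed (M : QMod.{u, v} A) (e : A) :
    SSupClosed (fun m : M.carrier => M.act m e = m) :=
  ⟨fun s hs => by
    rw [M.sSup_act s e, sSup_eq_iSup]
    exact iSup_congr fun m => iSup_congr fun hm => hs m hm⟩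

/-- The right `A`-module `eA = {a : A // e * a = a}` determined by an element `e`
(the splitting object of the idempotent endomorphism `a ↦ e * a` of `A` when
`e` is idempotent). -/
def idemMod (e : A) : QMod.{u, u} A where
  carrier := { a : A // e * a = a }
  act x b := ⟨x.1 * b, by rw [← mul_assoc, x.2]⟩
  act_one x := Subtype.ext (mul_one _)
  act_mul x a b := Subtype.ext (mul_assoc _ _ _).symm
  sSup_act s a := by
    apply Subtype.ext
    simp only [subtype_iSup_val]
    show sSup (Subtype.val '' s) * a = _
    rw [UQuantale.sSup_mul, iSup_image]
  act_sSup x s := by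
    apply Subtype.ext
    simp only [subtype_iSup_val]
    exact UQuantale.mul_sSup x.1 s

/-- For an idempotent `e`, the *corner* quantale `eAe = {x : A // e * x * e = x}`:
multiplication is that of `A`, the unit is `e`, and suprema are computed in `A`. -/
def cornerQuantale (e : A) (he : e * e = e) : UQuantale { x : A // e * x * e = x } := by
  have hleft : ∀ x : A, e * x * e = x → e * x = x := fun x hx => by
    rw [← hx, ← mul_assoc, ← mul_assoc, he]
  have hright : ∀ x : A, e * x * e = x → x * e = x := fun x hx => by
    rw [← hx, mul_assoc, he]
  exact
  { subtypeCompleteLattice (fun x : A => e * x * e = x) with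
    mul := fun x y => ⟨x.1 * y.1, by
      rw [← mul_assoc, hleft x.1 x.2, mul_assoc, hright y.1 y.2]⟩
    one := ⟨e, by rw [he, he]⟩
    mul_assoc := fun x y z => Subtype.ext (mul_assoc _ _ _)
    one_mul := fun x => Subtype.ext (hleft x.1 x.2)
    mul_one := fun x => Subtype.ext (hright x.1 x.2)
    mul_sSup := fun a s => by
      apply Subtype.ext
      simp only [subtype_iSup_val]
      show a.1 * sSup (Subtype.val '' s) = _
      rw [UQuantale.mul_sSup, iSup_image]
      rfl
    sSup_mul := fun s b => by
      apply Subtype.ext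
      simp only [subtype_iSup_val]
      show sSup (Subtype.val '' s) * b.1 = _
      rw [UQuantale.sSup_mul, iSup_image]
      rfl
  }

/-- `e` is a *full* idempotent: `e * e = e` and `AeA = A`, i.e. every element of `A`
is a supremum of elements of the form `a * e * a'`. -/
def IsFullIdempotent (e : A) : Prop :=
  e * e = e ∧
    ∀ x : A, ∃ (ι : Type u) (f g : ι → A), x = ⨆ i, f i * e * g i

end Idem

/-!
If `AeA = A`, write `1 = ⨆ i, aᵢ * e * bᵢ`; then every `m` in a module is
`⨆ i, (m · aᵢ) · (e * bᵢ)`, a join of values of maps `eA ⟶ M`, so two maps out of `M` that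
agree after every `eA ⟶ M` agree. Conversely, for `n : A` let `n'` be the largest element of
`AeA` below `n`. The maps `x ↦ x ⇨ᵣ n` and `x ↦ x ⇨ᵣ n'` from `A` to the dual module `Aᵒᵈ`
agree on the image of every `h : eA ⟶ A`: as `h x = h e * e * x`, any `h x * z ≤ n` is already
`≤ n'`. Faithfulness makes them equal, and evaluating at `1` gives `n = n'`.
-/

instance UQuantale.isQuantale {A : Type u} [UQuantale A] : IsQuantale A :=
  ⟨UQuantale.mul_sSup, UQuantale.sSup_mul⟩

namespace Quantale

variable {α : Type*} [CompleteLattice α]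

theorem one_rightMulResiduation [Monoid α] [IsQuantale α] (x : α) : 1 ⇨ᵣ x = x :=
  eq_of_forall_le_iff fun z => by rw [rightMulResiduation_le_iff_mul_le, one_mul]

variable [Semigroup α] [IsQuantale α]

theorem mul_rightMulResiduation (a b x : α) : a * b ⇨ᵣ x = b ⇨ᵣ a ⇨ᵣ x :=
  eq_of_forall_le_iff fun z => by
    simp only [rightMulResiduation_le_iff_mul_le, mul_assoc]

theorem rightMulResiduation_sInf (a : α) (s : Set α) : a ⇨ᵣ sInf s = ⨅ x ∈ s, a ⇨ᵣ x :=
  eq_of_forall_le_iff fun z => by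
    simp only [rightMulResiduation_le_iff_mul_le, le_iInf_iff, le_sInf_iff]

theorem sSup_rightMulResiduation (s : Set α) (x : α) : sSup s ⇨ᵣ x = ⨅ a ∈ s, a ⇨ᵣ x :=
  eq_of_forall_le_iff fun z => by
    simp only [rightMulResiduation_le_iff_mul_le, le_iInf_iff, sSup_mul_distrib, iSup₂_le_iff]

end Quantale

section

open Quantale OrderDual

def regMod (A : Type u) [UQuantale A] : QMod.{u, u} A where
  carrier := A
  act m a := m * a
  act_one := mul_one
  act_mul m a b := (mul_assoc m a b).symm
  sSup_act := UQuantale.sSup_mul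
  act_sSup := UQuantale.mul_sSup

def dualMod (A : Type u) [UQuantale A] : QMod.{u, u} A where
  carrier := Aᵒᵈ
  act x a := toDual (a ⇨ᵣ ofDual x)
  act_one x := one_rightMulResiduation (ofDual x)
  act_mul x a b := mul_rightMulResiduation a b (ofDual x)
  sSup_act s a := by
    rw [ofDual_sSup, rightMulResiduation_sInf]
    rfl
  act_sSup x s := sSup_rightMulResiduation s (ofDual x)

variable {A : Type u} [UQuantale A]

def regModLift (M : QMod.{u, u} A) (m : M.carrier) : regMod A ⟶ M :=
  ⟨fun a => M.act m a, M.act_sSup m, M.act_mul m⟩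

def idemModLift (e : A) (M : QMod.{u, u} A) (m : M.carrier) : idemMod e ⟶ M :=
  ⟨fun x => M.act m x.1, fun s => by
    change Set { a : A // e * a = a } at s
    exact (M.act_sSup m _).trans iSup_image, fun x a => M.act_mul m x.1 a⟩

theorem idemMod_hom_apply {e : A} (he : e * e = e) {M : QMod.{u, u} A} (h : idemMod e ⟶ M)
    (x : (idemMod e).carrier) : h.1 x = M.act (h.1 ⟨e, he⟩) x.1 := by
  conv_lhs => rw [← show (idemMod e).act ⟨e, he⟩ x.1 = x from Subtype.ext x.2]
  exact h.2.2 _ _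

theorem QMod.isGenerator_of_forall_eq_iSup {Q : QMod.{u, v} A}
    (hQ : ∀ (M : QMod.{u, v} A) (m : M.carrier), ∃ (ι : Type w) (k : ι → (Q ⟶ M))
      (x : ι → Q.carrier), m = ⨆ i, (k i).1 (x i)) :
    QMod.IsGenerator Q := by
  intro M N f g hfg
  refine Subtype.ext (funext fun m => ?_)
  obtain ⟨ι, k, x, rfl⟩ := hQ M m
  rw [QMod.hom_iSup, QMod.hom_iSup]
  exact iSup_congr fun i => congrFun (congrArg Subtype.val (hfg (k i))) (x i)

theorem eq_iSup_idemModLift {e : A} (he : e * e = e) {ι : Type w} {a b : ι → A}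
    (hab : 1 = ⨆ i, a i * e * b i) (M : QMod.{u, u} A) (m : M.carrier) :
    m = ⨆ i, (idemModLift e M (M.act m (a i))).1 ⟨e * b i, by rw [← mul_assoc, he]⟩ := by
  calc m = M.act m (⨆ i, a i * e * b i) := by rw [← hab, M.act_one]
    _ = _ := by
      rw [M.act_iSup]
      exact iSup_congr fun i => by rw [mul_assoc, M.act_mul]; rfl

theorem isGenerator_idemMod_of_isFullIdempotent {e : A} (hfull : IsFullIdempotent e) :
    QMod.IsGenerator (idemMod e) := by
  obtain ⟨he, hspan⟩ := hfull
  obtain ⟨ι, a, b, hab⟩ := hspan 1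
  exact QMod.isGenerator_of_forall_eq_iSup fun M m => ⟨ι, _, _, eq_iSup_idemModLift he hab M m⟩

/-- The largest element of `AeA` below `n`. -/
def sandwichSup (e n : A) : A :=
  ⨆ p : {p : A × A // p.1 * e * p.2 ≤ n}, p.1.1 * e * p.1.2

theorem sandwichSup_le (e n : A) : sandwichSup e n ≤ n :=
  iSup_le fun p => p.2

theorem le_sandwichSup {e n a b : A} (h : a * e * b ≤ n) : a * e * b ≤ sandwichSup e n :=
  le_iSup (fun p : {p : A × A // p.1 * e * p.2 ≤ n} => p.1.1 * e * p.1.2) ⟨(a, b), h⟩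

theorem rightMulResiduation_sandwichSup (e n a b : A) :
    a * e * b ⇨ᵣ sandwichSup e n = a * e * b ⇨ᵣ n :=
  eq_of_forall_le_iff fun z => by
    simp only [rightMulResiduation_le_iff_mul_le]
    refine ⟨fun h => h.trans (sandwichSup_le e n), fun h => ?_⟩
    rw [mul_assoc] at h ⊢
    exact le_sandwichSup h

def residuationHom (n : A) : regMod A ⟶ dualMod A :=
  regModLift (dualMod A) (toDual n)

theorem residuationHom_apply (n x : A) : (residuationHom n).1 x = toDual (x ⇨ᵣ n) := rfl

theorem comp_residuationHom_sandwichSup {e : A} (he : e * e = e) (n : A)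
    (h : idemMod e ⟶ regMod A) :
    h ≫ residuationHom (sandwichSup e n) = h ≫ residuationHom n := by
  set m : A := h.1 ⟨e, he⟩
  have hm : m * e = m := (idemMod_hom_apply he h ⟨e, he⟩).symm
  have hx (x : (idemMod e).carrier) : h.1 x = m * e * x.1 := by
    rw [hm]; exact idemMod_hom_apply he h x
  refine Subtype.ext (funext fun x => ?_)
  show (residuationHom _).1 (h.1 x) = (residuationHom n).1 (h.1 x)
  rw [hx, residuationHom_apply, residuationHom_apply, rightMulResiduation_sandwichSup]

theorem sandwichSup_eq_of_isGenerator {e : A} (he : e * e = e)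
    (hgen : QMod.IsGenerator (idemMod e)) (n : A) : sandwichSup e n = n := by
  have h := congrArg (fun f => ofDual (f.1 (1 : A)))
    (hgen _ _ (comp_residuationHom_sandwichSup he n))
  simp only [residuationHom_apply, one_rightMulResiduation] at h
  exact h

theorem isFullIdempotent_of_isGenerator {e : A} (he : e * e = e)
    (hgen : QMod.IsGenerator (idemMod e)) : IsFullIdempotent e :=
  ⟨he, fun n => ⟨{p : A × A // p.1 * e * p.2 ≤ n}, fun p => p.1.1, fun p => p.1.2,
     (sandwichSup_eq_of_isGenerator he hgen n).symm⟩⟩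

end

/-- for an idempotent `e` in a quantale `A`, the right `A`-module `eA`
is a generator of the category of right `A`-modules if and only if `e` is a full
idempotent, i.e. `AeA = A` (every element of `A` is a supremum of elements
`a * e * a'`). -/
theorem idemMod_generator_iff_full {A : Type u} [UQuantale A] (e : A) (he : e * e = e) :
    QMod.IsGenerator (idemMod e) ↔ IsFullIdempotent e :=
  ⟨isFullIdempotent_of_isGenerator he, isGenerator_idemMod_of_isFullIdempotent⟩
end
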